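/- arXiv:2401.04328 — 6 statements merged into one kernel-verified Lean document; each statement's English description precedes it below -/
import Mathlib

section
/- Suppose b ∈ ℓ² satisfies Lb = f and let b̃ be the unique minimal-ℓ²-norm element with Lb̃ = f. Then the residual function r(x) = ∑_{n∈ℕ} d_n^{-1/2}(b̃_n − b_n) g_n(x) is given by an absolutely convergent series for every x ∈ S, vanishes at each collocation point x_k (k = 1,…,Ñ), and satisfies the uniform bound sup_{x∈S} |r(x)| ≤ ‖(F_n d_n^{-1/2})_n‖_{ℓ²} · ‖b‖_{ℓ²}. In particular, the residual of the minimal-norm collocation solution is bounded uniformly on S by a constant times the norm of any exact feasible solution, independently of the number of collocation points. -/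
/-!
The minimal-norm solution `b̃` is orthogonal to `ker L`, which contains `b - b̃`, so Pythagoras
gives `‖b̃ - b‖ ≤ ‖b‖`. Each term of the residual series is bounded by `Fₙ dₙ^{-1/2} |b̃ₙ - bₙ|`,
so Cauchy–Schwarz in `ℓ²` gives absolute convergence and the uniform bound. At a collocation
point `x_k` the residual series is `(L b̃ - L b)_k = 0`.
-/

open scoped ENNReal InnerProductSpace

section MinimalNorm

variable {𝕜 E F : Type*} [RCLike 𝕜] [NormedAddCommGroup E] [InnerProductSpace 𝕜 E]

theorem Submodule.inner_eq_zero_of_forall_norm_le_norm_sub (K : Submodule 𝕜 E) {a : E}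
    (h : ∀ w ∈ K, ‖a‖ ≤ ‖a - w‖) : ∀ w ∈ K, ⟪a, w⟫_𝕜 = 0 := by
  have hinf : ‖a - 0‖ = ⨅ w : K, ‖a - w‖ := by
    refine le_antisymm (le_ciInf fun w => by simpa using h w w.2) ?_
    exact ciInf_le ⟨0, by rintro _ ⟨w, rfl⟩; exact norm_nonneg _⟩ (0 : K) |>.trans_eq (by simp)
  simpa using (K.norm_eq_iInf_iff_inner_eq_zero K.zero_mem).1 hinf

theorem LinearMap.norm_sub_le_of_forall_norm_le [AddCommGroup F] [Module 𝕜 F] (L : E →ₗ[𝕜] F)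
    {a b : E} (hab : L a = L b) (hmin : ∀ c, L c = L b → ‖a‖ ≤ ‖c‖) : ‖a - b‖ ≤ ‖b‖ := by
  have horth : ⟪a, b - a⟫_𝕜 = 0 := by
    refine (ker L).inner_eq_zero_of_forall_norm_le_norm_sub (fun w hw => hmin _ ?_) _ ?_
    · rw [map_sub, LinearMap.mem_ker.1 hw, sub_zero, hab]
    · rw [LinearMap.mem_ker, map_sub, hab, sub_self]
  have hpyth := norm_add_sq_eq_norm_sq_add_norm_sq_of_inner_eq_zero (𝕜 := 𝕜) a (b - a) horth
  rw [add_sub_cancel, norm_sub_rev] at hpyth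
  nlinarith [norm_nonneg a, norm_nonneg (a - b), norm_nonneg b]

end MinimalNorm

section CauchySchwarz

variable {ι E G : Type*} [NormedAddCommGroup E] [SeminormedAddCommGroup G]

theorem lp.norm_eq_sqrt_tsum_sq (f : lp (fun _ : ι => E) 2) : ‖f‖ = √(∑' i, ‖f i‖ ^ 2) := by
  rw [lp.norm_eq_tsum_rpow (by norm_num), Real.sqrt_eq_rpow]
  norm_num

theorem summable_norm_and_norm_tsum_le_of_norm_le_mul {w : ι → ℝ} (hw : Memℓp w 2)
    (c : lp (fun _ : ι => E) 2) {t : ι → G} (ht : ∀ i, ‖t i‖ ≤ ‖w i‖ * ‖c i‖) :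
    (Summable fun i => ‖t i‖) ∧ ‖∑' i, t i‖ ≤ √(∑' i, w i ^ 2) * ‖c‖ := by
  let W : lp (fun _ : ι => ℝ) 2 := ⟨w, hw⟩
  have hconj : (2 : ℝ≥0∞).toReal.HolderConjugate (2 : ℝ≥0∞).toReal := by
    rw [Real.holderConjugate_iff]; norm_num
  obtain ⟨hsum, hle⟩ := lp.tsum_mul_le_mul_norm hconj W (lp.toNorm c)
  simp only [lp.toNorm_coe, norm_norm, lp.norm_toNorm] at hsum hle
  have hsum_t : Summable fun i => ‖t i‖ := hsum.of_nonneg_of_le (fun _ => norm_nonneg _) ht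
  refine ⟨hsum_t, ?_⟩
  calc ‖∑' i, t i‖ ≤ ∑' i, ‖t i‖ := norm_tsum_le_tsum_norm hsum_t
    _ ≤ ∑' i, ‖w i‖ * ‖c i‖ := hsum_t.tsum_le_tsum ht hsum
    _ ≤ ‖W‖ * ‖c‖ := hle
    _ = √(∑' i, w i ^ 2) * ‖c‖ := by simp [lp.norm_eq_sqrt_tsum_sq, W]

end CauchySchwarz

theorem Complex.norm_ofReal_mul_mul_le {r F : ℝ} (hr : 0 ≤ r) (c : ℂ) {z : ℂ} (hz : ‖z‖ ≤ F) :
    ‖(r : ℂ) * c * z‖ ≤ ‖F * r‖ * ‖c‖ := by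
  have hF : 0 ≤ F := (norm_nonneg _).trans hz
  rw [norm_mul, norm_mul, Complex.norm_real, Real.norm_of_nonneg hr,
    Real.norm_of_nonneg (mul_nonneg hF hr)]
  calc r * ‖c‖ * ‖z‖ ≤ r * ‖c‖ * F := by gcongr
    _ = F * r * ‖c‖ := by ring

theorem residual_uniform_bound_general
    (N : ℕ) (S : Type*)
    (d : ℕ → ℝ) (hd : ∀ n, 0 < d n)
    (g : ℕ → S → ℂ) (F : ℕ → ℝ)
    (hgF : ∀ n x, ‖g n x‖ ≤ F n)
    (hFd : Memℓp (fun n => F n * d n ^ (-(1 : ℝ) / 2)) 2)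
    (x : Fin N → S)
    (L : lp (fun _ : ℕ => ℂ) 2 →L[ℂ] EuclideanSpace ℂ (Fin N))
    (hL : ∀ b k, L b k = ∑' n, ((d n ^ (-(1 : ℝ) / 2) : ℝ) : ℂ) * b n * g n (x k))
    (f : EuclideanSpace ℂ (Fin N))
    (b btil : lp (fun _ : ℕ => ℂ) 2)
    (hb : L b = f) (hbtil : L btil = f)
    (hmin : ∀ a : lp (fun _ : ℕ => ℂ) 2, L a = f → ‖btil‖ ≤ ‖a‖) :
    (∀ y : S, Summable fun n =>
      ‖((d n ^ (-(1 : ℝ) / 2) : ℝ) : ℂ) * (btil n - b n) * g n y‖) ∧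
    (∀ k : Fin N,
      ∑' n, ((d n ^ (-(1 : ℝ) / 2) : ℝ) : ℂ) * (btil n - b n) * g n (x k) = 0) ∧
    (∀ y : S,
      ‖∑' n, ((d n ^ (-(1 : ℝ) / 2) : ℝ) : ℂ) * (btil n - b n) * g n y‖
        ≤ Real.sqrt (∑' n, (F n * d n ^ (-(1 : ℝ) / 2)) ^ 2) * ‖b‖) := by
  have hseries (c : lp (fun _ : ℕ => ℂ) 2) (y : S) :=
    summable_norm_and_norm_tsum_le_of_norm_le_mul hFd c fun n =>
      Complex.norm_ofReal_mul_mul_le (Real.rpow_nonneg (hd n).le _) (c n) (hgF n y)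
  have hdist : ‖btil - b‖ ≤ ‖b‖ :=
    (L : lp (fun _ : ℕ => ℂ) 2 →ₗ[ℂ] EuclideanSpace ℂ (Fin N)).norm_sub_le_of_forall_norm_le
      (hbtil.trans hb.symm) fun a ha => hmin a (ha.trans hb)
  refine ⟨fun y => (hseries (btil - b) y).1, fun k => ?_, fun y => ?_⟩
  · have hsplit := (hseries btil (x k)).1.of_norm.tsum_sub (hseries b (x k)).1.of_norm
    simp only [← sub_mul, ← mul_sub] at hsplit
    rw [hsplit, ← hL, ← hL, hb, hbtil, sub_self]
  · exact (hseries (btil - b) y).2.trans (by gcongr)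

/-- the residual `r(x) = ∑ₙ dₙ^{-1/2}(b̃ₙ − bₙ)gₙ(x)` of the minimal-norm
collocation solution is given by an absolutely convergent series, vanishes at the
collocation points, and is bounded uniformly on `S` by
`‖(Fₙ dₙ^{-1/2})ₙ‖_{ℓ²}·‖b‖_{ℓ²}` for any exact feasible solution `b`. -/
theorem residual_uniform_bound
    (N : ℕ) (hN : 1 ≤ N) (S : Type*)
    (d : ℕ → ℝ) (hd : ∀ n, 0 < d n)
    (g : ℕ → S → ℂ) (F : ℕ → ℝ) (hF0 : ∀ n, 0 ≤ F n)
    (hgF : ∀ n x, ‖g n x‖ ≤ F n)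
    (hFd : Memℓp (fun n => F n * d n ^ (-(1 : ℝ) / 2)) 2)
    (x : Fin N → S)
    (L : lp (fun _ : ℕ => ℂ) 2 →L[ℂ] EuclideanSpace ℂ (Fin N))
    (hL : ∀ b k, L b k = ∑' n, ((d n ^ (-(1 : ℝ) / 2) : ℝ) : ℂ) * b n * g n (x k))
    (f : EuclideanSpace ℂ (Fin N))
    (b btil : lp (fun _ : ℕ => ℂ) 2)
    (hb : L b = f) (hbtil : L btil = f)
    (hmin : ∀ a : lp (fun _ : ℕ => ℂ) 2, L a = f → ‖btil‖ ≤ ‖a‖) :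
    (∀ y : S, Summable fun n =>
      ‖((d n ^ (-(1 : ℝ) / 2) : ℝ) : ℂ) * (btil n - b n) * g n y‖) ∧
    (∀ k : Fin N,
      ∑' n, ((d n ^ (-(1 : ℝ) / 2) : ℝ) : ℂ) * (btil n - b n) * g n (x k) = 0) ∧
    (∀ y : S,
      ‖∑' n, ((d n ^ (-(1 : ℝ) / 2) : ℝ) : ℂ) * (btil n - b n) * g n y‖
        ≤ Real.sqrt (∑' n, (F n * d n ^ (-(1 : ℝ) / 2)) ^ 2) * ‖b‖) :=
  residual_uniform_bound_general N S d hd g F hgF hFd x L hL f b btil hb hbtil hmin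
end

section
/- Let H be a complex Hilbert space and (C_n)_{n≥1} a decreasing sequence (C_{n+1} ⊆ C_n for all n) of nonempty closed affine subspaces of H (translates of closed linear subspaces), and let u^{(n)} denote the unique minimal-norm element of C_n. Then the sequence (‖u^{(n)}‖)_n is nondecreasing, and the following are equivalent: (i) there exists Q > 0 with ‖u^{(n)}‖ ≤ Q for all n; (ii) the intersection ∩_{n≥1} C_n is nonempty. Moreover, when these hold, the sequence (u^{(n)}) is Cauchy and converges in H to the unique minimal-norm element u of ∩_{n≥1} C_n. -/
open scoped BigOperators

private lemma affine_closed' {H : Type*} [NormedAddCommGroup H] [InnerProductSpace ℂ H]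
    (v : H) (V : Submodule ℂ H) (hV : IsClosed (V : Set H)) :
    IsClosed ((fun w => v + w) '' (V : Set H)) := by
  have h : (fun w => v + w) '' (V : Set H) = (fun x => x - v) ⁻¹' (V : Set H) := by
    ext x
    constructor
    · rintro ⟨w, hw, rfl⟩; simpa using hw
    · intro hx; exact ⟨x - v, hx, by simp⟩
  rw [h]
  exact hV.preimage (continuous_id.sub continuous_const)

private lemma affine_midpoint' {H : Type*} [NormedAddCommGroup H] [InnerProductSpace ℂ H]
    (v : H) (V : Submodule ℂ H) {a b : H}
    (ha : a ∈ (fun w => v + w) '' (V : Set H)) (hb : b ∈ (fun w => v + w) '' (V : Set H)) :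
    (2:ℂ)⁻¹ • (a + b) ∈ (fun w => v + w) '' (V : Set H) := by
  obtain ⟨x, hx, rfl⟩ := ha
  obtain ⟨y, hy, rfl⟩ := hb
  refine ⟨(2:ℂ)⁻¹ • (x + y), V.smul_mem _ (V.add_mem hx hy), ?_⟩
  show v + (2:ℂ)⁻¹ • (x + y) = (2:ℂ)⁻¹ • ((v + x) + (v + y))
  module

/-- for a decreasing sequence of nonempty closed affine subspaces `Cₙ` of a
Hilbert space with minimal-norm elements `u⁽ⁿ⁾`, the norms `‖u⁽ⁿ⁾‖` are nondecreasing,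
boundedness of the `u⁽ⁿ⁾` is equivalent to `⋂ₙ Cₙ ≠ ∅`, and in that case `u⁽ⁿ⁾` is Cauchy
and converges to the minimal-norm element of `⋂ₙ Cₙ`. -/
theorem boundedness_solvability_convergence
    (H : Type*) [NormedAddCommGroup H] [InnerProductSpace ℂ H] [CompleteSpace H]
    (C : ℕ → Set H)
    (haff : ∀ n, ∃ (v : H) (V : Submodule ℂ H),
      IsClosed (V : Set H) ∧ C n = (fun w => v + w) '' (V : Set H))
    (hdec : ∀ n, C (n + 1) ⊆ C n)
    (u : ℕ → H)
    (hu : ∀ n, u n ∈ C n ∧ ∀ a ∈ C n, ‖u n‖ ≤ ‖a‖) :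
    Monotone (fun n => ‖u n‖) ∧
    ((∃ Q > (0 : ℝ), ∀ n, ‖u n‖ ≤ Q) ↔ (⋂ n, C n).Nonempty) ∧
    ((∃ Q > (0 : ℝ), ∀ n, ‖u n‖ ≤ Q) →
      CauchySeq u ∧
      ∃ v : H, v ∈ ⋂ n, C n ∧ (∀ a ∈ ⋂ n, C n, ‖v‖ ≤ ‖a‖) ∧
        (∀ w ∈ ⋂ n, C n, (∀ a ∈ ⋂ n, C n, ‖w‖ ≤ ‖a‖) → w = v) ∧
        Filter.Tendsto u Filter.atTop (nhds v)) := by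
  -- basic structural facts
  have hclosed : ∀ n, IsClosed (C n) := by
    intro n
    obtain ⟨v, V, hV, hCn⟩ := haff n
    rw [hCn]; exact affine_closed' v V hV
  have hmid : ∀ n, ∀ a ∈ C n, ∀ b ∈ C n, (2:ℂ)⁻¹ • (a + b) ∈ C n := by
    intro n a ha b hb
    obtain ⟨v, V, hV, hCn⟩ := haff n
    rw [hCn] at ha hb ⊢
    exact affine_midpoint' v V ha hb
  have hanti : Antitone C := antitone_nat_of_succ_le hdec
  have hnorm_mono : Monotone (fun n => ‖u n‖) := by
    apply monotone_nat_of_le_succ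
    intro n
    exact (hu n).2 (u (n+1)) (hdec n (hu (n+1)).1)
  -- key parallelogram inequality
  have hhalf : ∀ a b : H, ‖(2:ℂ)⁻¹ • (a + b)‖ = ‖a + b‖ / 2 := by
    intro a b
    rw [norm_smul]
    simp
    ring
  have hkey : ∀ n, ∀ a ∈ C n, ∀ b ∈ C n,
      ‖a - b‖^2 ≤ 2*‖a‖^2 + 2*‖b‖^2 - 4*‖u n‖^2 := by
    intro n a ha b hb
    have hm := hmid n a ha b hb
    have h1 : ‖u n‖ ≤ ‖(2:ℂ)⁻¹ • (a + b)‖ := (hu n).2 _ hm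
    rw [hhalf] at h1
    have h3 : 2*‖u n‖ ≤ ‖a + b‖ := by linarith
    have h4 : (2*‖u n‖)^2 ≤ ‖a + b‖^2 :=
      pow_le_pow_left₀ (by positivity) h3 2
    have hpar := parallelogram_law_with_norm ℂ a b
    nlinarith [hpar, h4]
  -- main convergence argument
  have main : (∃ Q > (0:ℝ), ∀ n, ‖u n‖ ≤ Q) →
      CauchySeq u ∧ ∃ v : H, Filter.Tendsto u Filter.atTop (nhds v) ∧ v ∈ ⋂ n, C n ∧
        (∀ a ∈ ⋂ n, C n, ‖v‖ ≤ ‖a‖) := by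
    rintro ⟨Q, hQ, hQle⟩
    set s : ℕ → ℝ := fun n => ‖u n‖^2 with hs
    have hsmono : Monotone s := fun m n h =>
      pow_le_pow_left₀ (norm_nonneg _) (hnorm_mono h) 2
    have hsbdd : BddAbove (Set.range s) := by
      refine ⟨Q^2, ?_⟩
      rintro _ ⟨n, rfl⟩
      exact pow_le_pow_left₀ (norm_nonneg _) (hQle n) 2
    have hsconv : Filter.Tendsto s Filter.atTop (nhds (⨆ n, s n)) :=
      tendsto_atTop_ciSup hsmono hsbdd
    have hscauchy : CauchySeq s := hsconv.cauchySeq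
    have hcauchy : CauchySeq u := by
      rw [Metric.cauchySeq_iff']
      intro ε hε
      obtain ⟨N, hN⟩ := (Metric.cauchySeq_iff'.1 hscauchy) (ε^2/2) (by positivity)
      refine ⟨N, fun n hn => ?_⟩
      have hsubn : u n ∈ C N := hanti hn (hu n).1
      have hk := hkey N (u n) hsubn (u N) (hu N).1
      have hd := hN n hn
      rw [Real.dist_eq] at hd
      have h2 : s N ≤ s n := hsmono hn
      have hd' : s n - s N < ε^2/2 := by
        rw [abs_of_nonneg (by linarith)] at hd; exact hd
      have h3 : ‖u n - u N‖^2 < ε^2 := by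
        simp only [hs] at hd' h2
        nlinarith [hk, hd']
      have h4 : ‖u n - u N‖ < ε := lt_of_pow_lt_pow_left₀ 2 (le_of_lt hε) h3
      rwa [dist_eq_norm]
    obtain ⟨v, hv⟩ := cauchySeq_tendsto_of_complete hcauchy
    have hvmem : v ∈ ⋂ n, C n := by
      rw [Set.mem_iInter]
      intro n
      refine (hclosed n).mem_of_tendsto hv ?_
      exact Filter.eventually_atTop.2 ⟨n, fun m hm => hanti hm (hu m).1⟩
    have hvmin : ∀ a ∈ ⋂ n, C n, ‖v‖ ≤ ‖a‖ := by
      intro a ha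
      refine le_of_tendsto hv.norm ?_
      exact Filter.Eventually.of_forall fun n => (hu n).2 a (Set.mem_iInter.1 ha n)
    exact ⟨hcauchy, v, hv, hvmem, hvmin⟩
  refine ⟨hnorm_mono, ⟨?_, ?_⟩, ?_⟩
  · intro h
    obtain ⟨_, v, _, hvmem, _⟩ := main h
    exact ⟨v, hvmem⟩
  · rintro ⟨a, ha⟩
    refine ⟨‖a‖ + 1, by positivity, fun n => ?_⟩
    have := (hu n).2 a (Set.mem_iInter.1 ha n)
    linarith
  · intro h
    obtain ⟨hcauchy, v, hv, hvmem, hvmin⟩ := main h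
    refine ⟨hcauchy, v, hvmem, hvmin, ?_, hv⟩
    intro w hw hwmin
    have h1 : ‖v‖ ≤ ‖w‖ := hvmin w hw
    have h2 : ‖w‖ ≤ ‖v‖ := hwmin v hvmem
    have hm : (2:ℂ)⁻¹ • (w + v) ∈ ⋂ n, C n :=
      Set.mem_iInter.2 fun n =>
        hmid n w (Set.mem_iInter.1 hw n) v (Set.mem_iInter.1 hvmem n)
    have h3 : ‖v‖ ≤ ‖(2:ℂ)⁻¹ • (w + v)‖ := hvmin _ hm
    rw [hhalf] at h3
    have h4 : (2*‖v‖)^2 ≤ ‖w + v‖^2 :=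
      pow_le_pow_left₀ (by positivity) (by linarith) 2
    have hpar := parallelogram_law_with_norm ℂ w v
    have h5 : ‖w - v‖ = 0 := by
      nlinarith [norm_nonneg (w - v), hpar, h4, h1, h2, norm_nonneg v, norm_nonneg w]
    exact sub_eq_zero.1 (norm_eq_zero.1 h5)
end

section
/- Fix f ∈ ℂ^Ñ and suppose there exists N₀ ∈ ℕ such that the restriction L_{N₀} of L to sequences supported on the first N₀ coordinates is surjective onto ℂ^Ñ. Let b̃_∞ ∈ ℓ² be the unique minimal-ℓ²-norm solution of Lb = f and set ũ_∞(x) = ∑_{n∈ℕ} d_n^{-1/2} b̃_{∞,n} e^{iω_n·x}. For each N_b ≥ N₀, let b̃^{(N_b)} ∈ ℂ^{N_b} be the unique minimal Euclidean-norm solution of the truncated system ∑_{n=1}^{N_b} d_n^{-1/2} b_n c_{k,n} = f_k (k = 1,…,Ñ), and set ũ_{N_b}(x) = ∑_{n=1}^{N_b} d_n^{-1/2} b̃^{(N_b)}_n e^{iω_n·x}. Then there exist a constant A > 0 and N₁ ≥ N₀ such that for all N_b ≥ N₁, sup_{x∈ℝ^m} |ũ_∞(x) − ũ_{N_b}(x)|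 ≤ A · (∑_{n > N_b} (1+‖ω_n‖₂)^{2p} d_n^{-1})^{1/2}. In particular, ũ_{N_b} → ũ_∞ uniformly on ℝ^m as N_b → ∞. -/
/-!
Minimality of `b̃_∞` makes it orthogonal to `ker L`, hence an element of the range of `L†`,
which is finite-dimensional and so closed: `b̃_∞ = L† y`. Its coefficients are then
`⟪L eₙ, y⟫` and decay like the weight `(1 + ‖ωₙ‖)^p dₙ^{-1/2}`.

Since `L` is already onto on sequences supported below `N₀`, it has a bounded right inverse `R`
into them. Cutting off the tail `t` of `b̃_∞` at `N_b` and repairing the data with `R (L t)`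
gives a competitor for the truncated problem, and Pythagoras in `ker L` yields
`‖b̃_∞ - b̃^{(N_b)}‖ ≤ (1 + ‖R L‖) ‖t‖`, where `‖t‖` is bounded by the weighted tail.
Finally, `ũ(x)` is an `ℓ²`-pairing of the coefficients with a sequence dominated by the weight,
so the uniform error is controlled by the `ℓ²` error.
-/

open Filter Topology
open scoped InnerProductSpace ENNReal

section MinNormSolution

variable {𝕜 E F : Type*} [RCLike 𝕜] [NormedAddCommGroup E] [InnerProductSpace 𝕜 E]

section Linear

variable [AddCommGroup F] [Module 𝕜 F] {L : E →ₗ[𝕜] F} {x y b : E}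

theorem mem_orthogonal_ker_of_forall_norm_le (hx : ∀ b, L b = L x → ‖x‖ ≤ ‖b‖) :
    x ∈ (LinearMap.ker L)ᗮ := by
  have hbdd : BddBelow (Set.range fun w : LinearMap.ker L => ‖x - w‖) :=
    ⟨0, by rintro _ ⟨w, rfl⟩; positivity⟩
  have hmin : ‖x - 0‖ = ⨅ w : LinearMap.ker L, ‖x - w‖ := by
    refine le_antisymm (le_ciInf fun w => ?_) (ciInf_le hbdd 0)
    rw [sub_zero]
    exact hx (x - w) (by simp [LinearMap.mem_ker.1 w.2])
  rw [Submodule.mem_orthogonal']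
  simpa using ((LinearMap.ker L).norm_eq_iInf_iff_inner_eq_zero (Submodule.zero_mem _)).1 hmin

theorem norm_sq_eq_add_norm_sub_sq_of_mem_orthogonal_ker (hx : x ∈ (LinearMap.ker L)ᗮ)
    (hb : L b = L x) : ‖b‖ ^ 2 = ‖x‖ ^ 2 + ‖b - x‖ ^ 2 := by
  have hker : b - x ∈ LinearMap.ker L := by simp [hb]
  have := norm_add_sq_eq_norm_sq_add_norm_sq_of_inner_eq_zero x (b - x)
    (Submodule.inner_left_of_mem_orthogonal hker hx)
  simpa only [sq, add_sub_cancel] using this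

theorem norm_sub_le_norm_sub_of_mem_orthogonal_ker (hx : x ∈ (LinearMap.ker L)ᗮ)
    (hy : L y = L x) (hb : L b = L x) (hyb : ‖y‖ ≤ ‖b‖) : ‖x - y‖ ≤ ‖x - b‖ := by
  have hy' := norm_sq_eq_add_norm_sub_sq_of_mem_orthogonal_ker hx hy
  have hb' := norm_sq_eq_add_norm_sub_sq_of_mem_orthogonal_ker hx hb
  rw [norm_sub_rev x y, norm_sub_rev x b]
  refine (pow_le_pow_iff_left₀ (norm_nonneg _) (norm_nonneg _) two_ne_zero).1 ?_
  nlinarith [pow_le_pow_left₀ (norm_nonneg y) hyb 2]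

theorem norm_sub_le_mul_norm_of_mem_orthogonal_ker {V : Submodule 𝕜 E} (P : E →L[𝕜] E)
    (hLP : ∀ z, L (P z) = L z) (hPV : ∀ z, P z ∈ V) (hx : x ∈ (LinearMap.ker L)ᗮ)
    (hy : L y = L x) (hyV : ∀ b ∈ V, L b = L x → ‖y‖ ≤ ‖b‖) {t : E} (ht : x - t ∈ V) :
    ‖x - y‖ ≤ (1 + ‖P‖) * ‖t‖ := by
  have hLb : L (x - t + P t) = L x := by simp [hLP]
  calc ‖x - y‖ ≤ ‖x - (x - t + P t)‖ :=
        norm_sub_le_norm_sub_of_mem_orthogonal_ker hx hy hLb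
          (hyV _ (V.add_mem ht (hPV t)) hLb)
    _ = ‖t - P t‖ := by congr 1; abel
    _ ≤ ‖t‖ + ‖P‖ * ‖t‖ := (norm_sub_le _ _).trans (by gcongr; exact P.le_opNorm t)
    _ = (1 + ‖P‖) * ‖t‖ := by ring

end Linear

theorem exists_adjoint_apply_eq_of_mem_orthogonal_ker [NormedAddCommGroup F]
    [InnerProductSpace 𝕜 F] [CompleteSpace E] [CompleteSpace F] [FiniteDimensional 𝕜 F]
    {L : E →L[𝕜] F} {x : E}
    (hx : x ∈ (LinearMap.ker (L : E →ₗ[𝕜] F))ᗮ) : ∃ y, L.adjoint y = x := by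
  rw [L.orthogonal_ker, (Submodule.closed_of_finiteDimensional _).submodule_topologicalClosure_eq]
    at hx
  exact LinearMap.mem_range.1 hx

end MinNormSolution

theorem ContinuousLinearMap.exists_rightInverse_of_surjOn {𝕜 E F : Type*}
    [NontriviallyNormedField 𝕜] [CompleteSpace 𝕜] [NormedAddCommGroup E] [NormedSpace 𝕜 E]
    [NormedAddCommGroup F] [NormedSpace 𝕜 F] [FiniteDimensional 𝕜 F] (L : E →L[𝕜] F)
    {V : Submodule 𝕜 E} (h : Set.SurjOn L V Set.univ) :
    ∃ R : F →L[𝕜] E, ∀ z, R z ∈ V ∧ L (R z) = z := by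
  have hrange : (L.comp V.subtypeL).range = ⊤ := by
    refine LinearMap.range_eq_top.2 fun z => ?_
    obtain ⟨b, hbV, rfl⟩ := h (Set.mem_univ z)
    exact ⟨⟨b, hbV⟩, rfl⟩
  obtain ⟨R, hR⟩ := (L.comp V.subtypeL).exists_rightInverse_of_surjective hrange
  exact ⟨V.subtypeL.comp R, fun z => ⟨(R z).2, congr($hR z)⟩⟩

namespace lp

section Tail

variable {𝕜 E : Type*} [NormedAddCommGroup E] {p : ℝ≥0∞}

def tail (f : lp (fun _ : ℕ => E) p) (M : ℕ) : lp (fun _ : ℕ => E) p :=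
  ⟨fun n => if M ≤ n then f n else 0, (lp.memℓp f).norm.mono fun n => by split_ifs <;> simp⟩

@[simp]
theorem tail_apply (f : lp (fun _ : ℕ => E) p) (M n : ℕ) :
    tail f M n = if M ≤ n then f n else 0 := rfl

variable [NormedRing 𝕜] [Module 𝕜 E] [IsBoundedSMul 𝕜 E]

variable (𝕜 E p) in
def supportedBelow (M : ℕ) :
    Submodule 𝕜 (lp (fun _ : ℕ => E) p) where
  carrier := {f | ∀ n, M ≤ n → f n = 0}
  add_mem' {f g} hf hg n hn := by simp [hf n hn, hg n hn]
  zero_mem' _ _ := rfl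
  smul_mem' c f hf n hn := by simp [hf n hn]

theorem supportedBelow_mono {M M' : ℕ} (h : M ≤ M') :
    supportedBelow 𝕜 E p M ≤ supportedBelow 𝕜 E p M' :=
  fun _ hf n hn => hf n (h.trans hn)

theorem sub_tail_mem_supportedBelow (f : lp (fun _ : ℕ => E) p) (M : ℕ) :
    f - tail f M ∈ supportedBelow 𝕜 E p M := fun n hn => by simp [hn]

end Tail

theorem norm_tail_le_of_norm_le {E : Type*} [NormedAddCommGroup E] {p : ℝ≥0∞} [Fact (1 ≤ p)]
    {f : lp (fun _ : ℕ => E) p} (g : lp (fun _ : ℕ => ℝ) p) {C : ℝ}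
    (hfg : ∀ n, ‖f n‖ ≤ C * g n) (M : ℕ) : ‖tail f M‖ ≤ |C| * ‖tail g M‖ := by
  rw [← Real.norm_eq_abs, ← norm_smul]
  refine lp.norm_mono (zero_lt_one.trans_le Fact.out).ne' fun n => ?_
  simp only [tail_apply, lp.coeFn_smul, Pi.smul_apply]
  split_ifs
  · simpa [abs_mul] using (hfg n).trans (le_abs_self _)
  · simp

theorem norm_eq_sqrt_tsum {ι : Type*} {E : ι → Type*} [∀ i, NormedAddCommGroup (E i)]
    (f : lp E 2) : ‖f‖ = √(∑' i, ‖f i‖ ^ 2) := by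
  rw [lp.norm_eq_tsum_rpow (by norm_num), Real.sqrt_eq_rpow]
  norm_num

variable {𝕜 : Type*} [RCLike 𝕜]

theorem tsum_mul_eq_inner_star {ι : Type*} (a b : lp (fun _ : ι => 𝕜) 2) :
    ∑' i, a i * b i = ⟪star a, b⟫_𝕜 := by
  simp [lp.inner_eq_tsum, lp.star_apply, RCLike.inner_apply, mul_comm]

theorem norm_tsum_mul_sub_tsum_mul_le {ι : Type*} {φ : ι → 𝕜} (g : lp (fun _ : ι => ℝ) 2)
    (hφ : ∀ i, ‖φ i‖ ≤ g i) (b b' : lp (fun _ : ι => 𝕜) 2) :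
    ‖∑' i, φ i * b i - ∑' i, φ i * b' i‖ ≤ ‖g‖ * ‖b - b'‖ := by
  let a : lp (fun _ : ι => 𝕜) 2 := ⟨φ, (lp.memℓp g).mono hφ⟩
  have ha : ‖a‖ ≤ ‖g‖ := lp.norm_mono two_ne_zero fun i => (hφ i).trans (le_abs_self _)
  calc ‖∑' i, a i * b i - ∑' i, a i * b' i‖ = ‖⟪star a, b - b'⟫_𝕜‖ := by
        rw [tsum_mul_eq_inner_star, tsum_mul_eq_inner_star, inner_sub_right]
    _ ≤ ‖star a‖ * ‖b - b'‖ := norm_inner_le_norm _ _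
    _ ≤ ‖g‖ * ‖b - b'‖ := by rw [norm_star]; gcongr

theorem adjoint_apply_eq_inner {ι F : Type*} [DecidableEq ι] [NormedAddCommGroup F]
    [InnerProductSpace 𝕜 F] [CompleteSpace F] (T : lp (fun _ : ι => 𝕜) 2 →L[𝕜] F) (y : F)
    (i : ι) : T.adjoint y i = ⟪T (lp.single 2 i 1), y⟫_𝕜 := by
  rw [← ContinuousLinearMap.adjoint_inner_right, lp.inner_single_left]
  simp [RCLike.inner_apply]

theorem norm_adjoint_apply_le {ι κ : Type*} [DecidableEq ι] [Fintype κ]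
    (T : lp (fun _ : ι => 𝕜) 2 →L[𝕜] EuclideanSpace 𝕜 κ) (y : EuclideanSpace 𝕜 κ) (i : ι)
    {C : ℝ} (hC : ∀ k, ‖T (lp.single 2 i 1) k‖ ≤ C) : ‖T.adjoint y i‖ ≤ C * ∑ k, ‖y k‖ := by
  rw [adjoint_apply_eq_inner, PiLp.inner_apply, Finset.mul_sum]
  refine (norm_sum_le _ _).trans (Finset.sum_le_sum fun k _ => ?_)
  exact (norm_inner_le_norm _ _).trans (by gcongr; exact hC k)

theorem exists_norm_sub_le_mul_norm_tail {F : Type*} [NormedAddCommGroup F] [NormedSpace 𝕜 F]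
    [FiniteDimensional 𝕜 F] {L : lp (fun _ : ℕ => 𝕜) 2 →L[𝕜] F} {N₀ : ℕ}
    (hL : Set.SurjOn L (supportedBelow 𝕜 𝕜 2 N₀) Set.univ) {x : lp (fun _ : ℕ => 𝕜) 2}
    (hx : x ∈ (LinearMap.ker (L : lp (fun _ : ℕ => 𝕜) 2 →ₗ[𝕜] F))ᗮ) :
    ∃ K > 0, ∀ M, N₀ ≤ M → ∀ y, L y = L x →
      (∀ b ∈ supportedBelow 𝕜 𝕜 2 M, L b = L x → ‖y‖ ≤ ‖b‖) → ‖x - y‖ ≤ K * ‖tail x M‖ := by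
  obtain ⟨R, hR⟩ := L.exists_rightInverse_of_surjOn hL
  refine ⟨1 + ‖R.comp L‖, by positivity, fun M hM y hy hyV => ?_⟩
  exact norm_sub_le_mul_norm_of_mem_orthogonal_ker (R.comp L) (fun z => (hR (L z)).2)
    (fun z => supportedBelow_mono hM (hR (L z)).1) hx hy hyV (sub_tail_mem_supportedBelow x M)

end lp

theorem tendsto_tsum_ite_le_atTop_zero {G : Type*} [AddCommGroup G] [TopologicalSpace G]
    [IsTopologicalAddGroup G] (w : ℕ → G) :
    Tendsto (fun M => ∑' n, if M ≤ n then w n else 0) atTop (𝓝 0) := by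
  have h (M : ℕ) :
      (∑' n, if M ≤ n then w n else 0) = ∑' n : {n // n ∉ Finset.range M}, w n := by
    refine Eq.trans ?_ (tsum_subtype {n | n ∉ Finset.range M} w).symm
    congr 1 with n
    simp [Set.indicator]
  simp_rw [h]
  exact (tendsto_tsum_compl_atTop_zero w).comp tendsto_finset_range

theorem tendstoUniformly_max_of_norm_sub_le_mul_sqrt_tail {α G : Type*}
    [SeminormedAddCommGroup G] {F : ℕ → α → G} {f : α → G} {w : ℕ → ℝ} {K : ℝ} {N₀ : ℕ}
    (h : ∀ M, N₀ ≤ M → ∀ x, ‖f x - F M x‖ ≤ K * √(∑' n, if M ≤ n then w n else 0)) :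
    TendstoUniformly (fun M x => F (max M N₀) x) f atTop := by
  have hrate : Tendsto (fun M => K * √(∑' n, if max M N₀ ≤ n then w n else 0)) atTop (𝓝 0) := by
    simpa using ((Real.continuous_sqrt.tendsto 0).comp ((tendsto_tsum_ite_le_atTop_zero w).comp
      (tendsto_atTop_mono (le_max_left · N₀) tendsto_id))).const_mul K
  refine Metric.tendstoUniformly_iff.2 fun ε hε => ?_
  filter_upwards [hrate.eventually (gt_mem_nhds hε)] with M hM x
  rw [dist_eq_norm]
  exact (h _ (le_max_right M N₀) x).trans_lt hM

noncomputable def fourierWeight {m : ℕ} (ω : ℕ → EuclideanSpace ℝ (Fin m)) (d : ℕ → ℝ)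
    (p n : ℕ) : ℝ :=
  (1 + ‖ω n‖) ^ p * d n ^ (-(1 : ℝ) / 2)

section FourierWeight

variable {m : ℕ} {ω : ℕ → EuclideanSpace ℝ (Fin m)} {d : ℕ → ℝ} {p n : ℕ}

theorem fourierWeight_sq (hd : 0 < d n) :
    fourierWeight ω d p n ^ 2 = (1 + ‖ω n‖) ^ (2 * p) * (d n)⁻¹ := by
  rw [fourierWeight, mul_pow, ← pow_mul, mul_comm p, ← Real.rpow_natCast (d n ^ _),
    ← Real.rpow_mul hd.le]
  norm_num [Real.rpow_neg_one]

theorem rpow_neg_half_le_fourierWeight (hd : 0 < d n) :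
    d n ^ (-(1 : ℝ) / 2) ≤ fourierWeight ω d p n :=
  le_mul_of_one_le_left (Real.rpow_nonneg hd.le _)
    (one_le_pow₀ (le_add_of_nonneg_right (norm_nonneg _)))

end FourierWeight

section FourierCollocation

variable {m p N : ℕ} {ω : ℕ → EuclideanSpace ℝ (Fin m)} {d : ℕ → ℝ}

theorem norm_apply_single_le_fourierWeight (hd : ∀ n, 0 < d n) {Bp : ℝ} {c : Fin N → ℕ → ℂ}
    (hc : ∀ k n, ‖c k n‖ ≤ Bp * (1 + ‖ω n‖) ^ p)
    {L : lp (fun _ : ℕ => ℂ) 2 →L[ℂ] EuclideanSpace ℂ (Fin N)}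
    (hL : ∀ b k, L b k = ∑' n, ((d n ^ (-(1 : ℝ) / 2) : ℝ) : ℂ) * b n * c k n) (n : ℕ)
    (k : Fin N) : ‖L (lp.single 2 n 1) k‖ ≤ Bp * fourierWeight ω d p n := by
  rw [hL, tsum_eq_single n fun n' hn' => by rw [lp.single_apply_ne 2 n _ hn', mul_zero, zero_mul]]
  rw [lp.single_apply_self, mul_one, norm_mul, Complex.norm_real,
    Real.norm_of_nonneg (Real.rpow_nonneg (hd n).le _), fourierWeight]
  calc d n ^ (-(1 : ℝ) / 2) * ‖c k n‖ ≤ d n ^ (-(1 : ℝ) / 2) * (Bp * (1 + ‖ω n‖) ^ p) :=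
        mul_le_mul_of_nonneg_left (hc k n) (Real.rpow_nonneg (hd n).le _)
    _ = _ := by ring

theorem exists_norm_apply_le_mul_fourierWeight (hd : ∀ n, 0 < d n) {Bp : ℝ}
    {c : Fin N → ℕ → ℂ} (hc : ∀ k n, ‖c k n‖ ≤ Bp * (1 + ‖ω n‖) ^ p)
    {L : lp (fun _ : ℕ => ℂ) 2 →L[ℂ] EuclideanSpace ℂ (Fin N)}
    (hL : ∀ b k, L b k = ∑' n, ((d n ^ (-(1 : ℝ) / 2) : ℝ) : ℂ) * b n * c k n)
    {x : lp (fun _ : ℕ => ℂ) 2}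
    (hx : x ∈ (LinearMap.ker (L : lp (fun _ : ℕ => ℂ) 2 →ₗ[ℂ] EuclideanSpace ℂ (Fin N)))ᗮ) :
    ∃ C, ∀ n, ‖x n‖ ≤ C * fourierWeight ω d p n := by
  obtain ⟨y, rfl⟩ := exists_adjoint_apply_eq_of_mem_orthogonal_ker hx
  refine ⟨Bp * ∑ k, ‖y k‖, fun n => ?_⟩
  rw [mul_right_comm]
  exact lp.norm_adjoint_apply_le L y n (norm_apply_single_le_fourierWeight hd hc hL n)

theorem norm_fourierSum_sub_le (hd : ∀ n, 0 < d n) (g : lp (fun _ : ℕ => ℝ) 2)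
    (hg : ∀ n, fourierWeight ω d p n ≤ g n)
    {U : lp (fun _ : ℕ => ℂ) 2 → EuclideanSpace ℝ (Fin m) → ℂ}
    (hU : ∀ b x, U b x = ∑' n, ((d n ^ (-(1 : ℝ) / 2) : ℝ) : ℂ) * b n *
      Complex.exp (Complex.I * ∑ j, (ω n j : ℂ) * (x j : ℂ)))
    (a b : lp (fun _ : ℕ => ℂ) 2) (x : EuclideanSpace ℝ (Fin m)) :
    ‖U a x - U b x‖ ≤ ‖g‖ * ‖a - b‖ := by
  set φ : ℕ → ℂ := fun n => ((d n ^ (-(1 : ℝ) / 2) : ℝ) : ℂ) *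
    Complex.exp (Complex.I * ∑ j, (ω n j : ℂ) * (x j : ℂ))
  have hUφ (b : lp (fun _ : ℕ => ℂ) 2) : U b x = ∑' n, φ n * b n :=
    (hU b x).trans (tsum_congr fun n => by ring)
  have hφ (n : ℕ) : ‖φ n‖ ≤ g n := by
    have hphase : (∑ j, (ω n j : ℂ) * (x j : ℂ)) = ((∑ j, ω n j * x j : ℝ) : ℂ) := by
      push_cast; rfl
    rw [norm_mul, hphase, Complex.norm_exp_I_mul_ofReal, mul_one, Complex.norm_real,
      Real.norm_of_nonneg (Real.rpow_nonneg (hd n).le _)]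
    exact (rpow_neg_half_le_fourierWeight (hd n)).trans (hg n)
  rw [hUφ, hUφ]
  exact lp.norm_tsum_mul_sub_tsum_mul_le g hφ a b

theorem norm_tail_of_coe_eq_fourierWeight (hd : ∀ n, 0 < d n) {g : lp (fun _ : ℕ => ℝ) 2}
    (hg : ∀ n, g n = fourierWeight ω d p n) (M : ℕ) : ‖lp.tail g M‖ =
      √(∑' n, if M ≤ n then (1 + ‖ω n‖) ^ (2 * p) * (d n)⁻¹ else 0) := by
  rw [lp.norm_eq_sqrt_tsum]
  refine congrArg _ (tsum_congr fun n => ?_)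
  simp only [lp.tail_apply]
  split_ifs <;> simp [sq_abs, hg, fourierWeight_sq (hd n)]

end FourierCollocation

theorem truncated_basis_solutions_converge_general
    (m p N : ℕ)
    (ω : ℕ → EuclideanSpace ℝ (Fin m))
    (d : ℕ → ℝ) (hd : ∀ n, 0 < d n)
    (hwd : Memℓp (fun n => (1 + ‖ω n‖) ^ p * d n ^ (-(1 : ℝ) / 2)) 2)
    (Bp : ℝ)
    (c : Fin N → ℕ → ℂ)
    (hc : ∀ k n, ‖c k n‖ ≤ Bp * (1 + ‖ω n‖) ^ p)
    (L : lp (fun _ : ℕ => ℂ) 2 →L[ℂ] EuclideanSpace ℂ (Fin N))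
    (hL : ∀ b k, L b k = ∑' n, ((d n ^ (-(1 : ℝ) / 2) : ℝ) : ℂ) * b n * c k n)
    (U : lp (fun _ : ℕ => ℂ) 2 → EuclideanSpace ℝ (Fin m) → ℂ)
    (hU : ∀ b x, U b x = ∑' n, ((d n ^ (-(1 : ℝ) / 2) : ℝ) : ℂ) * b n *
      Complex.exp (Complex.I * ∑ j, (ω n j : ℂ) * (x j : ℂ)))
    (f : EuclideanSpace ℂ (Fin N))
    (N₀ : ℕ)
    (hsurj : ∀ f' : EuclideanSpace ℂ (Fin N), ∃ b : lp (fun _ : ℕ => ℂ) 2,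
      (∀ n, N₀ ≤ n → b n = 0) ∧ L b = f')
    (binf : lp (fun _ : ℕ => ℂ) 2)
    (hbinf : L binf = f ∧ ∀ b : lp (fun _ : ℕ => ℂ) 2, L b = f → ‖binf‖ ≤ ‖b‖)
    (btr : ℕ → lp (fun _ : ℕ => ℂ) 2)
    (hbtr : ∀ Nb, N₀ ≤ Nb →
      (∀ n, Nb ≤ n → btr Nb n = 0) ∧ L (btr Nb) = f ∧
      ∀ b : lp (fun _ : ℕ => ℂ) 2,
        (∀ n, Nb ≤ n → b n = 0) → L b = f → ‖btr Nb‖ ≤ ‖b‖) :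
    (∃ A > (0 : ℝ), ∃ N₁, N₀ ≤ N₁ ∧ ∀ Nb, N₁ ≤ Nb →
      ∀ x : EuclideanSpace ℝ (Fin m),
        ‖U binf x - U (btr Nb) x‖ ≤
          A * Real.sqrt (∑' n, if Nb ≤ n then (1 + ‖ω n‖) ^ (2 * p) * (d n)⁻¹ else 0)) ∧
    TendstoUniformly (fun Nb x => U (btr (max Nb N₀)) x) (U binf) Filter.atTop := by
  obtain ⟨hLbinf, hbinf_min⟩ := hbinf
  let g : lp (fun _ : ℕ => ℝ) 2 := ⟨fourierWeight ω d p, hwd⟩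
  have hbinf_orth :
      binf ∈ (LinearMap.ker (L : lp (fun _ : ℕ => ℂ) 2 →ₗ[ℂ] EuclideanSpace ℂ (Fin N)))ᗮ :=
    mem_orthogonal_ker_of_forall_norm_le fun b hb => hbinf_min b (hb.trans hLbinf)
  obtain ⟨C, hdecay⟩ := exists_norm_apply_le_mul_fourierWeight hd hc hL hbinf_orth
  obtain ⟨K, hK, hstab⟩ := lp.exists_norm_sub_le_mul_norm_tail (fun z _ => hsurj z) hbinf_orth
  have hbound (Nb : ℕ) (hNb : N₀ ≤ Nb) (x : EuclideanSpace ℝ (Fin m)) :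
      ‖U binf x - U (btr Nb) x‖ ≤ ‖g‖ * K * |C| * ‖lp.tail g Nb‖ := by
    obtain ⟨-, hLbtr, hbtr_min⟩ := hbtr Nb hNb
    calc ‖U binf x - U (btr Nb) x‖ ≤ ‖g‖ * ‖binf - btr Nb‖ :=
          norm_fourierSum_sub_le hd g (fun _ => le_rfl) hU _ _ x
      _ ≤ ‖g‖ * (K * (|C| * ‖lp.tail g Nb‖)) := by
        gcongr
        refine (hstab Nb hNb _ (hLbtr.trans hLbinf.symm)
          fun b hb hLb => hbtr_min b hb (hLb.trans hLbinf)).trans ?_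
        gcongr
        exact lp.norm_tail_le_of_norm_le g hdecay Nb
      _ = ‖g‖ * K * |C| * ‖lp.tail g Nb‖ := by ring
  simp only [norm_tail_of_coe_eq_fourierWeight hd (g := g) fun _ => rfl] at hbound
  refine ⟨⟨‖g‖ * K * |C| + 1, by positivity, N₀, le_rfl, fun Nb hNb x => ?_⟩,
    tendstoUniformly_max_of_norm_sub_le_mul_sqrt_tail hbound⟩
  exact (hbound Nb hNb x).trans (by gcongr; linarith)

/-- the truncated-basis minimal-norm collocation solutions `ũ_{N_b}` converge
uniformly on `ℝ^m` to the full-`ℓ²` minimal-norm solution `ũ_∞`, with error bounded by a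
constant times the square root of the weight tail `∑_{n>N_b} (1+‖ωₙ‖)^{2p} dₙ⁻¹`. -/
theorem truncated_basis_solutions_converge
    (m p N : ℕ) (hN : 1 ≤ N)
    (ω : ℕ → EuclideanSpace ℝ (Fin m))
    (d : ℕ → ℝ) (hd : ∀ n, 0 < d n)
    (hwd : Memℓp (fun n => (1 + ‖ω n‖) ^ p * d n ^ (-(1 : ℝ) / 2)) 2)
    (Bp : ℝ) (hBp : 0 < Bp)
    (c : Fin N → ℕ → ℂ)
    (hc : ∀ k n, ‖c k n‖ ≤ Bp * (1 + ‖ω n‖) ^ p)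
    (L : lp (fun _ : ℕ => ℂ) 2 →L[ℂ] EuclideanSpace ℂ (Fin N))
    (hL : ∀ b k, L b k = ∑' n, ((d n ^ (-(1 : ℝ) / 2) : ℝ) : ℂ) * b n * c k n)
    (U : lp (fun _ : ℕ => ℂ) 2 → EuclideanSpace ℝ (Fin m) → ℂ)
    (hU : ∀ b x, U b x = ∑' n, ((d n ^ (-(1 : ℝ) / 2) : ℝ) : ℂ) * b n *
      Complex.exp (Complex.I * ∑ j, (ω n j : ℂ) * (x j : ℂ)))
    (f : EuclideanSpace ℂ (Fin N))
    (N₀ : ℕ)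
    (hsurj : ∀ f' : EuclideanSpace ℂ (Fin N), ∃ b : lp (fun _ : ℕ => ℂ) 2,
      (∀ n, N₀ ≤ n → b n = 0) ∧ L b = f')
    (binf : lp (fun _ : ℕ => ℂ) 2)
    (hbinf : L binf = f ∧ ∀ b : lp (fun _ : ℕ => ℂ) 2, L b = f → ‖binf‖ ≤ ‖b‖)
    (btr : ℕ → lp (fun _ : ℕ => ℂ) 2)
    (hbtr : ∀ Nb, N₀ ≤ Nb →
      (∀ n, Nb ≤ n → btr Nb n = 0) ∧ L (btr Nb) = f ∧
      ∀ b : lp (fun _ : ℕ => ℂ) 2,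
        (∀ n, Nb ≤ n → b n = 0) → L b = f → ‖btr Nb‖ ≤ ‖b‖) :
    (∃ A > (0 : ℝ), ∃ N₁, N₀ ≤ N₁ ∧ ∀ Nb, N₁ ≤ Nb →
      ∀ x : EuclideanSpace ℝ (Fin m),
        ‖U binf x - U (btr Nb) x‖ ≤
          A * Real.sqrt (∑' n, if Nb ≤ n then (1 + ‖ω n‖) ^ (2 * p) * (d n)⁻¹ else 0)) ∧
    TendstoUniformly (fun Nb x => U (btr (max Nb N₀)) x) (U binf) Filter.atTop :=
  truncated_basis_solutions_converge_general m p N ω d hd hwd Bp c hc L hL U hU f N₀ hsurj binf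
    hbinf btr hbtr
end

section
/- Let T > 0, m, p ∈ ℕ, and let x_1,…,x_Ñ be distinct points in [0,T)^m. Then for every choice of prescribed Hermite–Birkhoff data f_{k,α} ∈ ℂ (k ∈ {1,…,Ñ}, α a multi-index in ℕ^m with |α| ≤ p) there exist a finite set of frequencies Λ ⊆ (2π/T)ℤ^m with cardinality |Λ| ≤ ((p+1)Ñ + 1)^m and coefficients a_ω ∈ ℂ (ω ∈ Λ) such that the trigonometric polynomial u(x) = ∑_{ω∈Λ} a_ω e^{iω·x} satisfies ∂^α u(x_k) = f_{k,α} for every k ∈ {1,…,Ñ} and every multi-index α with |α| ≤ p. -/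
open scoped BigOperators

/-- The partial derivative `∂ᵢ` of a function on `ℝ^m`, as an operator on functions. -/
noncomputable def partialDerivOp {m : ℕ} (i : Fin m) :
    (EuclideanSpace ℝ (Fin m) → ℂ) → (EuclideanSpace ℝ (Fin m) → ℂ) :=
  fun u x => fderiv ℝ u x (EuclideanSpace.single i 1)

/-- The mixed partial derivative `∂^α` associated with a multi-index `α : Fin m → ℕ`. -/
noncomputable def multiDeriv {m : ℕ} (α : Fin m → ℕ) :
    (EuclideanSpace ℝ (Fin m) → ℂ) → (EuclideanSpace ℝ (Fin m) → ℂ) :=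
  fun u => (List.finRange m).foldr (fun i v => (partialDerivOp i)^[α i] v) u

/-!
Substituting `X j = exp (i c y j)` with `c = 2π/T` turns a polynomial `P = ∑ P_d X^d` into the
trigonometric polynomial `∑ P_d exp (i c d·y)` with frequencies in `c ℕ^m`, and turns `∂^α` into
the Euler operator `∏ j, (i c X j ∂/∂X j)^(α j)`. The nodes become points `t k` with nonzero
coordinates, pairwise distinct because `c x ∈ [0, 2π)`. So it suffices to find `P` of degree
`≤ (p + 1) N` in each variable with prescribed Euler jets of order `≤ p` at the `t k`.

For each node `t k` and each other node `t l`, pick a coordinate `i` with `t k i ≠ t l i`; the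
product `V k` of the factors `(X i - t l i)^(p + 1)` kills all jets of order `≤ p` of `V k * w` at
the other nodes and does not vanish at `t k`. By the Leibniz rule the jet of `V k * w` at `t k` is
triangular in the jet of `w` with diagonal `V k (t k) ≠ 0`, so a suitable `w k` of degree `≤ p` in
each variable exists, and `P = ∑ k, V k * w k`.
-/

section EulerDeriv

open MvPolynomial

variable {σ R : Type*} [Fintype σ] [CommSemiring R] (κ : R)

noncomputable def eulerWeight (α : σ → ℕ) (d : σ →₀ ℕ) : R := ∏ j, (κ * d j) ^ α j

/-- The Euler operator `∏ j, (κ X j ∂/∂X j)^(α j)`; under `X j = exp (i c y j)` and `κ = i c` it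
becomes `∂^α`. -/
noncomputable def eulerDeriv (α : σ → ℕ) : MvPolynomial σ R →ₗ[R] MvPolynomial σ R :=
  (basisMonomials σ R).constr R fun d => monomial d (eulerWeight κ α d)

theorem eulerDeriv_monomial (α : σ → ℕ) (d : σ →₀ ℕ) (a : R) :
    eulerDeriv κ α (monomial d a) = monomial d (eulerWeight κ α d * a) := by
  have h := (basisMonomials σ R).constr_basis R (fun d => monomial d (eulerWeight κ α d)) d
  rw [coe_basisMonomials] at h
  calc eulerDeriv κ α (monomial d a) = a • eulerDeriv κ α (monomial d 1) := by
        rw [← map_smul, smul_monomial, smul_eq_mul, mul_one]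
    _ = monomial d (eulerWeight κ α d * a) := by
        rw [eulerDeriv, h, smul_monomial, smul_eq_mul, mul_comm]

theorem coeff_eulerDeriv (α : σ → ℕ) (d : σ →₀ ℕ) (P : MvPolynomial σ R) :
    coeff d (eulerDeriv κ α P) = eulerWeight κ α d * coeff d P := by
  classical
  induction P using MvPolynomial.induction_on' with
  | monomial e a =>
    rw [eulerDeriv_monomial, coeff_monomial, coeff_monomial]
    split_ifs with h <;> simp [h]
  | add P Q hP hQ => simp only [map_add, coeff_add, hP, hQ, mul_add]

theorem support_eulerDeriv_subset (α : σ → ℕ) (P : MvPolynomial σ R) :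
    (eulerDeriv κ α P).support ⊆ P.support := fun d hd => by
  rw [mem_support_iff, coeff_eulerDeriv] at hd
  exact mem_support_iff.mpr (right_ne_zero_of_mul hd)

theorem eulerWeight_zero (d : σ →₀ ℕ) : eulerWeight κ 0 d = 1 := by
  simp [eulerWeight]

theorem eulerWeight_add_left (α β : σ → ℕ) (d : σ →₀ ℕ) :
    eulerWeight κ (α + β) d = eulerWeight κ α d * eulerWeight κ β d := by
  simp only [eulerWeight, Pi.add_apply, pow_add, Finset.prod_mul_distrib]

theorem eulerDeriv_zero (P : MvPolynomial σ R) : eulerDeriv κ 0 P = P := by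
  ext d
  rw [coeff_eulerDeriv, eulerWeight_zero, one_mul]

theorem eulerDeriv_eulerDeriv (α β : σ → ℕ) (P : MvPolynomial σ R) :
    eulerDeriv κ α (eulerDeriv κ β P) = eulerDeriv κ (α + β) P := by
  ext d
  simp only [coeff_eulerDeriv, eulerWeight_add_left, mul_assoc]

variable [DecidableEq σ]

theorem eulerWeight_single (i : σ) (d : σ →₀ ℕ) : eulerWeight κ (Pi.single i 1) d = κ * d i := by
  rw [eulerWeight, Finset.prod_eq_single i (fun j _ hj => by simp [hj]) (by simp)]
  simp

theorem eulerWeight_add_right (α : σ → ℕ) (d e : σ →₀ ℕ) :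
    eulerWeight κ α (d + e) = ∑ β ∈ Finset.Iic α,
      (∏ j, ((α j).choose (β j) : R)) * (eulerWeight κ (α - β) d * eulerWeight κ β e) := by
  have hpow : ∀ j, (κ * (d + e) j) ^ α j = ∑ b ∈ Finset.Iic (α j),
      (κ * e j) ^ b * (κ * d j) ^ (α j - b) * ((α j).choose b : R) := by
    intro j
    rw [← Nat.range_succ_eq_Iic, ← add_pow, Finsupp.add_apply, Nat.cast_add, mul_add, add_comm]
  rw [eulerWeight, Finset.prod_congr rfl fun j _ => hpow j, Finset.prod_univ_sum]
  refine Finset.sum_congr rfl fun β _ => ?_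
  simp only [eulerWeight, Pi.sub_apply, ← Finset.prod_mul_distrib]
  exact Finset.prod_congr rfl fun j _ => by ring

theorem eulerDeriv_mul (α : σ → ℕ) (P Q : MvPolynomial σ R) :
    eulerDeriv κ α (P * Q) = ∑ β ∈ Finset.Iic α,
      (∏ j, ((α j).choose (β j) : R)) • (eulerDeriv κ (α - β) P * eulerDeriv κ β Q) := by
  induction P using MvPolynomial.induction_on' with
  | add P₁ P₂ h₁ h₂ =>
    simp only [add_mul, map_add, h₁, h₂, smul_add, Finset.sum_add_distrib]
  | monomial d a =>
    induction Q using MvPolynomial.induction_on' with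
    | add Q₁ Q₂ h₁ h₂ =>
      simp only [mul_add, map_add, h₁, h₂, smul_add, Finset.sum_add_distrib]
    | monomial e b =>
      simp only [monomial_mul, eulerDeriv_monomial, smul_monomial, ← map_sum,
        eulerWeight_add_right, Finset.sum_mul, smul_eq_mul]
      congr 1
      exact Finset.sum_congr rfl fun β _ => by ring

theorem eval_eulerDeriv_mul (t : σ → R) (α : σ → ℕ) (P Q : MvPolynomial σ R) :
    eval t (eulerDeriv κ α (P * Q)) = ∑ β ∈ Finset.Iic α, (∏ j, ((α j).choose (β j) : R)) *
      (eval t (eulerDeriv κ (α - β) P) * eval t (eulerDeriv κ β Q)) := by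
  simp only [eulerDeriv_mul, map_sum, smul_eval, map_mul]

end EulerDeriv

section VanishesToOrder

open MvPolynomial

variable {σ R : Type*} [Fintype σ] [CommRing R]

def VanishesToOrder (κ : R) (t : σ → R) (i : σ) (n : ℕ) (P : MvPolynomial σ R) : Prop :=
  ∀ α : σ → ℕ, α i < n → eval t (eulerDeriv κ α P) = 0

variable {κ : R} {t : σ → R} {i : σ}

theorem vanishesToOrder_zero (P : MvPolynomial σ R) : VanishesToOrder κ t i 0 P :=
  fun _ h => absurd h (Nat.not_lt_zero _)

theorem vanishesToOrder_X_sub_C : VanishesToOrder κ t i 1 (X i - C (t i)) := by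
  intro α hα
  have hw : eulerWeight κ α (Finsupp.single i 1) = eulerWeight κ α 0 := by
    refine Finset.prod_congr rfl fun j _ => ?_
    rcases eq_or_ne j i with rfl | hj
    · simp [Nat.lt_one_iff.mp hα]
    · simp [Finsupp.single_eq_of_ne hj]
  rw [X, C_apply, map_sub, eulerDeriv_monomial, eulerDeriv_monomial, hw]
  simp [eval_monomial]

variable [DecidableEq σ]

theorem VanishesToOrder.mul {n k : ℕ} {P Q : MvPolynomial σ R} (hP : VanishesToOrder κ t i n P)
    (hQ : VanishesToOrder κ t i k Q) : VanishesToOrder κ t i (n + k) (P * Q) := by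
  intro α hα
  rw [eval_eulerDeriv_mul]
  refine Finset.sum_eq_zero fun β hβ => ?_
  have hβα : β i ≤ α i := Finset.mem_Iic.mp hβ i
  by_cases h : (α - β) i < n
  · rw [hP _ h, zero_mul, mul_zero]
  · rw [hQ β (by rw [Pi.sub_apply] at h; omega), mul_zero, mul_zero]

theorem VanishesToOrder.mul_right {n : ℕ} {P : MvPolynomial σ R} (hP : VanishesToOrder κ t i n P)
    (Q : MvPolynomial σ R) : VanishesToOrder κ t i n (P * Q) :=
  hP.mul (vanishesToOrder_zero Q)

theorem vanishesToOrder_X_sub_C_pow (n : ℕ) :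
    VanishesToOrder κ t i n ((X i - C (t i)) ^ n) := by
  induction n with
  | zero => exact vanishesToOrder_zero _
  | succ n ih => exact pow_succ (X i - C (t i)) n ▸ ih.mul vanishesToOrder_X_sub_C

/-- By the Leibniz rule the jet of `V * w` is triangular in the jet of `w`, with diagonal
`eval t V`. -/
theorem eval_eulerDeriv_eq_zero_of_mul [IsDomain R] {V w : MvPolynomial σ R} (hV : eval t V ≠ 0)
    (α : σ → ℕ) (h : ∀ β ≤ α, eval t (eulerDeriv κ β (V * w)) = 0) :
    eval t (eulerDeriv κ α w) = 0 := by
  induction α using WellFoundedLT.induction with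
  | ind α ih =>
  have key := h α le_rfl
  rw [eval_eulerDeriv_mul, Finset.sum_eq_single_of_mem α (Finset.mem_Iic.mpr le_rfl)] at key
  · simpa [eulerDeriv_zero, hV] using key
  · intro β hβ hne
    have hβα := Finset.mem_Iic.mp hβ
    rw [ih β (lt_of_le_of_ne hβα hne) fun γ hγ => h γ (hγ.trans hβα), mul_zero, mul_zero]

end VanishesToOrder

section Vandermonde

open MvPolynomial

variable {σ K : Type*} [Field K] (κ : K) (p : ℕ) (t : σ → K)

noncomputable def eulerVandermonde (j : σ) : Matrix (Fin (p + 1)) (Fin (p + 1)) K :=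
  Matrix.of fun a z => (κ * z) ^ (a : ℕ) * t j ^ (z : ℕ)

theorem det_eulerVandermonde_ne_zero [CharZero K] (hκ : κ ≠ 0) {j : σ} (htj : t j ≠ 0) :
    (eulerVandermonde κ p t j).det ≠ 0 := by
  have h : eulerVandermonde κ p t j =
      (Matrix.vandermonde fun z : Fin (p + 1) => κ * z).transpose *
        Matrix.diagonal fun z : Fin (p + 1) => t j ^ (z : ℕ) := by
    ext a z
    simp [eulerVandermonde, Matrix.mul_diagonal]
  have hinj : Function.Injective fun z : Fin (p + 1) => κ * z := fun a b hab =>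
    Fin.ext (by exact_mod_cast mul_left_cancel₀ hκ hab)
  rw [h, Matrix.det_mul, Matrix.det_transpose, Matrix.det_diagonal]
  exact mul_ne_zero (Matrix.det_vandermonde_ne_zero_iff.mpr hinj)
    (Finset.prod_ne_zero_iff.mpr fun z _ => pow_ne_zero _ htj)

end Vandermonde

section Interpolation

open MvPolynomial

variable {σ K : Type*} [Fintype σ] [DecidableEq σ] [Field K]

theorem card_support_le_of_degreeOf_le {R : Type*} [CommSemiring R] {P : MvPolynomial σ R} {D : ℕ}
    (h : ∀ i, degreeOf i P ≤ D) : P.support.card ≤ (D + 1) ^ Fintype.card σ := by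
  calc P.support.card ≤ (Fintype.piFinset fun _ : σ => Finset.range (D + 1)).card := by
        refine Finset.card_le_card_of_injOn (fun d => ⇑d) (fun d hd => ?_)
          (DFunLike.coe_injective.injOn)
        simpa [Nat.lt_succ_iff] using fun i => monomial_le_degreeOf i hd |>.trans (h i)
    _ = (D + 1) ^ Fintype.card σ := by simp

variable (κ : K) (p : ℕ) (t : σ → K)

/-- The jet matrix at `t` of the monomials `X^z`, `z ≤ p`, is the Kronecker product of the
matrices `eulerVandermonde κ p t j`, so its inverse is the product of their inverses. -/
noncomputable def dualJetPoly (β : σ → Fin (p + 1)) : MvPolynomial σ K :=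
  ∑ z : σ → Fin (p + 1), monomial (Finsupp.equivFunOnFinite.symm fun j => (z j : ℕ))
    (∏ j, (eulerVandermonde κ p t j)⁻¹ (z j) (β j))

theorem eval_eulerDeriv_dualJetPoly [CharZero K] (hκ : κ ≠ 0) (ht : ∀ j, t j ≠ 0)
    (α β : σ → Fin (p + 1)) :
    eval t (eulerDeriv κ (fun j => α j) (dualJetPoly κ p t β)) = if α = β then 1 else 0 := by
  have hinv : ∀ j, eulerVandermonde κ p t j * (eulerVandermonde κ p t j)⁻¹ = 1 := fun j =>
    Matrix.mul_nonsing_inv _ (isUnit_iff_ne_zero.mpr (det_eulerVandermonde_ne_zero κ p t hκ (ht j)))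
  calc eval t (eulerDeriv κ (fun j => α j) (dualJetPoly κ p t β))
      = ∑ z : σ → Fin (p + 1), ∏ j,
          eulerVandermonde κ p t j (α j) (z j) * (eulerVandermonde κ p t j)⁻¹ (z j) (β j) := by
        simp only [dualJetPoly, map_sum]
        refine Finset.sum_congr rfl fun z _ => ?_
        rw [eulerDeriv_monomial, eval_monomial, Finsupp.prod_fintype _ _ fun _ => pow_zero _,
          eulerWeight, ← Finset.prod_mul_distrib, ← Finset.prod_mul_distrib]
        exact Finset.prod_congr rfl fun j _ => by simp [eulerVandermonde]; ring
    _ = ∏ j, (1 : Matrix (Fin (p + 1)) (Fin (p + 1)) K) (α j) (β j) := by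
        rw [← Fintype.prod_sum fun j w =>
          eulerVandermonde κ p t j (α j) w * (eulerVandermonde κ p t j)⁻¹ w (β j)]
        exact Finset.prod_congr rfl fun j _ => by rw [← hinv j, Matrix.mul_apply]
    _ = if α = β then 1 else 0 := by
        simp [Matrix.one_apply, Finset.prod_ite_zero, _root_.funext_iff]

theorem degreeOf_dualJetPoly_le (β : σ → Fin (p + 1)) (i : σ) :
    degreeOf i (dualJetPoly κ p t β) ≤ p := by
  refine degreeOf_le_iff.mpr fun d hd => ?_
  obtain ⟨z, -, hz⟩ := Finset.mem_biUnion.mp (support_sum hd)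
  rw [Finset.mem_singleton.mp (support_monomial_subset hz)]
  exact Nat.lt_succ_iff.mp (z i).isLt

theorem exists_eval_eulerDeriv_mul_eq [CharZero K] (hκ : κ ≠ 0) (ht : ∀ j, t j ≠ 0)
    {V : MvPolynomial σ K} (hV : eval t V ≠ 0) (G : (σ → Fin (p + 1)) → K) :
    ∃ w : MvPolynomial σ K, (∀ i, degreeOf i w ≤ p) ∧
      ∀ β : σ → Fin (p + 1), eval t (eulerDeriv κ (fun j => β j) (V * w)) = G β := by
  let poly := Fintype.linearCombination K (dualJetPoly κ p t)
  let jet : ((σ → Fin (p + 1)) → K) →ₗ[K] ((σ → Fin (p + 1)) → K) := LinearMap.pi fun β =>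
    (aeval t).toLinearMap ∘ₗ eulerDeriv κ (fun j => β j) ∘ₗ LinearMap.mulLeft K V ∘ₗ poly
  have hjet : ∀ v β, jet v β = eval t (eulerDeriv κ (fun j => β j) (V * poly v)) := fun _ _ => by
    simp [jet]
  have hpoly : ∀ v β, eval t (eulerDeriv κ (fun j => β j) (poly v)) = v β := fun v β => by
    simp [poly, Fintype.linearCombination_apply, smul_eval,
      eval_eulerDeriv_dualJetPoly κ p t hκ ht]
  have hinj : Function.Injective jet := by
    rw [← LinearMap.ker_eq_bot, LinearMap.ker_eq_bot']
    intro v hv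
    funext β
    rw [← hpoly v β]
    refine eval_eulerDeriv_eq_zero_of_mul hV _ fun γ hγ => ?_
    exact (hjet v fun j => ⟨γ j, (hγ j).trans_lt (β j).isLt⟩).symm.trans (congrFun hv _)
  obtain ⟨v, rfl⟩ := LinearMap.injective_iff_surjective.mp hinj G
  refine ⟨poly v, fun i => ?_, fun β => (hjet v β).symm⟩
  refine (degreeOf_sum_le i _ _).trans (Finset.sup_le fun γ _ => ?_)
  rw [smul_eq_C_mul]
  exact (degreeOf_C_mul_le _ i _).trans (degreeOf_dualJetPoly_le κ p t γ i)

variable {ι : Type*} {t : ι → σ → K}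

theorem exists_separating_factor {k l : ι} (hkl : t k ≠ t l) :
    ∃ F : MvPolynomial σ K, eval (t k) F ≠ 0 ∧ (∀ i, degreeOf i F ≤ p + 1) ∧
      ∃ i, VanishesToOrder κ (t l) i (p + 1) F := by
  obtain ⟨i, hi⟩ := Function.ne_iff.mp hkl
  refine ⟨(X i - C (t l i)) ^ (p + 1), ?_, fun j => ?_, i, vanishesToOrder_X_sub_C_pow _⟩
  · simpa [sub_eq_zero] using hi
  · calc degreeOf j ((X i - C (t l i)) ^ (p + 1)) ≤ (p + 1) * degreeOf j (X i - C (t l i)) :=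
          degreeOf_pow_le _ _ _
      _ ≤ (p + 1) * 1 := by
          gcongr
          refine (degreeOf_sub_le _ _ _).trans ?_
          rw [degreeOf_X, degreeOf_C]
          split_ifs <;> simp
      _ = p + 1 := mul_one _

variable [Fintype ι] [DecidableEq ι]

theorem exists_localizing_poly (ht : Function.Injective t) (k : ι) :
    ∃ V : MvPolynomial σ K, eval (t k) V ≠ 0 ∧
      (∀ i, degreeOf i V ≤ (p + 1) * (Fintype.card ι - 1)) ∧
      ∀ l ≠ k, ∃ i, VanishesToOrder κ (t l) i (p + 1) V := by
  have hF : ∀ l ∈ Finset.univ.erase k, ∃ F : MvPolynomial σ K, eval (t k) F ≠ 0 ∧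
      (∀ i, degreeOf i F ≤ p + 1) ∧ ∃ i, VanishesToOrder κ (t l) i (p + 1) F :=
    fun l hl => exists_separating_factor κ p (ht.ne (Finset.ne_of_mem_erase hl).symm)
  choose! F hFk hFdeg hFvan using hF
  refine ⟨∏ l ∈ Finset.univ.erase k, F l, ?_, fun i => ?_, fun l hl => ?_⟩
  · rw [map_prod]
    exact Finset.prod_ne_zero_iff.mpr hFk
  · calc degreeOf i (∏ l ∈ Finset.univ.erase k, F l)
        ≤ ∑ l ∈ Finset.univ.erase k, degreeOf i (F l) := degreeOf_prod_le _ _ _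
      _ ≤ ∑ l ∈ Finset.univ.erase k, (p + 1) := Finset.sum_le_sum fun l hl => hFdeg l hl i
      _ = (p + 1) * (Fintype.card ι - 1) := by
          rw [Finset.sum_const, Finset.card_erase_of_mem (Finset.mem_univ k), Finset.card_univ,
            smul_eq_mul, mul_comm]
  · have hmem : l ∈ Finset.univ.erase k := Finset.mem_erase.mpr ⟨hl, Finset.mem_univ l⟩
    obtain ⟨i, hi⟩ := hFvan l hmem
    exact ⟨i, Finset.mul_prod_erase _ F hmem ▸ hi.mul_right _⟩

theorem exists_mvPolynomial_hermiteBirkhoff [CharZero K] (hκ : κ ≠ 0) (ht : Function.Injective t)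
    (ht₀ : ∀ k j, t k j ≠ 0) (g : ι → (σ → ℕ) → K) :
    ∃ P : MvPolynomial σ K, (∀ i, degreeOf i P ≤ (p + 1) * Fintype.card ι) ∧
      ∀ k α, (∀ j, α j ≤ p) → eval (t k) (eulerDeriv κ α P) = g k α := by
  choose V hVk hVdeg hVvan using exists_localizing_poly κ p ht
  choose w hwdeg hwjet using fun k =>
    exists_eval_eulerDeriv_mul_eq κ p (t k) hκ (ht₀ k) (hVk k) fun β => g k fun j => β j
  refine ⟨∑ k, V k * w k, fun i => ?_, fun l α hα => ?_⟩
  · refine (degreeOf_sum_le i _ _).trans (Finset.sup_le fun k _ => ?_)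
    have hcard : 1 ≤ Fintype.card ι := Fintype.card_pos_iff.mpr ⟨k⟩
    calc degreeOf i (V k * w k) ≤ (p + 1) * (Fintype.card ι - 1) + p :=
          (degreeOf_mul_le i _ _).trans (add_le_add (hVdeg k i) (hwdeg k i))
      _ ≤ (p + 1) * Fintype.card ι := by
          obtain ⟨n, hn⟩ := Nat.exists_eq_add_of_le hcard
          rw [hn, Nat.add_sub_cancel_left]
          nlinarith
  · rw [map_sum, map_sum, Finset.sum_eq_single l]
    · exact hwjet l fun j => ⟨α j, Nat.lt_succ_of_le (hα j)⟩
    · intro k _ hkl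
      obtain ⟨i, hi⟩ := hVvan k l hkl.symm
      exact (hi.mul_right (w k)) α (Nat.lt_succ_of_le (hα i))
    · exact fun h => absurd (Finset.mem_univ l) h

end Interpolation

section TrigPoly

open MvPolynomial

variable {m : ℕ}

noncomputable def trigPoly (c : ℝ) (P : MvPolynomial (Fin m) ℂ) : EuclideanSpace ℝ (Fin m) → ℂ :=
  fun y => eval (fun j => Complex.exp (Complex.I * (c * y j))) P

noncomputable def latticeFreq {σ : Type*} (c : ℝ) (d : σ →₀ ℕ) : σ → ℝ := fun j => c * d j

theorem latticeFreq_injective {σ : Type*} {c : ℝ} (hc : c ≠ 0) :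
    Function.Injective (latticeFreq (σ := σ) c) := fun d e h => Finsupp.ext fun j => by
  simpa [latticeFreq, hc] using congrFun h j

noncomputable def freqCLM (w : Fin m → ℝ) : EuclideanSpace ℝ (Fin m) →L[ℝ] ℂ :=
  ∑ j, (Complex.I * w j) • (Complex.ofRealCLM.comp (EuclideanSpace.proj j))

theorem freqCLM_apply (w : Fin m → ℝ) (y : EuclideanSpace ℝ (Fin m)) :
    freqCLM w y = Complex.I * ∑ j, (w j : ℂ) * (y j : ℂ) := by
  simp [freqCLM, Finset.mul_sum, mul_assoc]

theorem freqCLM_single (w : Fin m → ℝ) (i : Fin m) :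
    freqCLM w (EuclideanSpace.single i 1) = Complex.I * w i := by
  simp [freqCLM_apply, apply_ite Complex.ofReal]

theorem trigPoly_eq_sum (c : ℝ) {P : MvPolynomial (Fin m) ℂ} {s : Finset (Fin m →₀ ℕ)}
    (hs : P.support ⊆ s) (y : EuclideanSpace ℝ (Fin m)) :
    trigPoly c P y = ∑ d ∈ s, coeff d P * Complex.exp (freqCLM (latticeFreq c d) y) := by
  rw [trigPoly, eval_eq', Finset.sum_subset hs fun d _ hd => by
    rw [notMem_support_iff.mp hd, zero_mul]]
  refine Finset.sum_congr rfl fun d _ => ?_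
  rw [freqCLM_apply, Finset.mul_sum, Complex.exp_sum]
  congr 1
  refine Finset.prod_congr rfl fun j _ => ?_
  rw [← Complex.exp_nat_mul, latticeFreq]
  push_cast
  ring_nf

theorem partialDerivOp_trigPoly (c : ℝ) (i : Fin m) (P : MvPolynomial (Fin m) ℂ) :
    partialDerivOp i (trigPoly c P) =
      trigPoly c (eulerDeriv (Complex.I * c) (Pi.single i 1) P) := by
  funext y
  have hderiv : HasFDerivAt (trigPoly c P) (∑ d ∈ P.support, coeff d P •
      Complex.exp (freqCLM (latticeFreq c d) y) • freqCLM (latticeFreq c d)) y := by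
    rw [show trigPoly c P = _ from funext (trigPoly_eq_sum c subset_rfl)]
    exact HasFDerivAt.fun_sum fun d _ => ((Complex.hasDerivAt_exp _).comp_hasFDerivAt y
      (freqCLM _).hasFDerivAt).const_mul _
  rw [partialDerivOp, hderiv.fderiv, trigPoly_eq_sum c (support_eulerDeriv_subset _ _ P),
    sum_apply]
  refine Finset.sum_congr rfl fun d _ => ?_
  simp only [smul_apply, freqCLM_single, coeff_eulerDeriv,
    eulerWeight_single, smul_eq_mul, latticeFreq, Complex.ofReal_mul, Complex.ofReal_natCast]
  ring

theorem iterate_partialDerivOp_trigPoly (c : ℝ) (i : Fin m) (n : ℕ) (P : MvPolynomial (Fin m) ℂ) :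
    (partialDerivOp i)^[n] (trigPoly c P) =
      trigPoly c (eulerDeriv (Complex.I * c) (Pi.single i n) P) := by
  induction n with
  | zero => rw [Pi.single_zero, eulerDeriv_zero]; rfl
  | succ n ih =>
    rw [Function.iterate_succ_apply', ih, partialDerivOp_trigPoly, eulerDeriv_eulerDeriv,
      ← Pi.single_add, add_comm]

theorem multiDeriv_trigPoly (c : ℝ) (α : Fin m → ℕ) (P : MvPolynomial (Fin m) ℂ) :
    multiDeriv α (trigPoly c P) = trigPoly c (eulerDeriv (Complex.I * c) α P) := by
  have hfold : ∀ L : List (Fin m),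
      L.foldr (fun i v => (partialDerivOp i)^[α i] v) (trigPoly c P) =
        trigPoly c (eulerDeriv (Complex.I * c) (L.map fun i => Pi.single i (α i)).sum P) := by
    intro L
    induction L with
    | nil => rw [List.map_nil, List.sum_nil, eulerDeriv_zero]; rfl
    | cons i L ih =>
      rw [List.foldr_cons, ih, iterate_partialDerivOp_trigPoly, eulerDeriv_eulerDeriv,
        List.map_cons, List.sum_cons]
  rw [multiDeriv, hfold, ← Fin.sum_univ_def, Finset.univ_sum_single]

theorem sum_extend_latticeFreq_eq_trigPoly {c : ℝ} (hc : c ≠ 0) (P : MvPolynomial (Fin m) ℂ) :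
    (fun y : EuclideanSpace ℝ (Fin m) => ∑ w ∈ P.support.image (latticeFreq c),
      Function.extend (latticeFreq c) (coeff · P) 0 w *
        Complex.exp (Complex.I * ∑ j, (w j : ℂ) * (y j : ℂ))) = trigPoly c P := by
  funext y
  rw [Finset.sum_image (latticeFreq_injective hc).injOn, trigPoly_eq_sum c subset_rfl]
  simp only [(latticeFreq_injective hc).extend_apply, freqCLM_apply]

theorem cexp_I_mul_injOn {T : ℝ} (hT : 0 < T) :
    Set.InjOn (fun u : ℝ => Complex.exp (Complex.I * ((2 * Real.pi / T : ℝ) * u)))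
      (Set.Ico 0 T) := by
  set c := 2 * Real.pi / T
  have hc : 0 < c := by positivity
  have hmem : ∀ u ∈ Set.Ico 0 T, c * u ∈ Set.Ico 0 (2 * Real.pi) := fun u ⟨hu₀, huT⟩ =>
    ⟨by positivity, by simpa [c, div_mul_cancel₀ _ hT.ne'] using mul_lt_mul_of_pos_left huT hc⟩
  intro u hu v hv h
  have hexp : Circle.exp (c * u) = Circle.exp (c * v) := Circle.ext <| by
    simpa [Circle.coe_exp, mul_comm] using h
  exact mul_left_cancel₀ hc.ne' <|
    Circle.exp_injOn_Ico (by simp) (hmem u hu) (hmem v hv) hexp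

end TrigPoly

theorem hermite_birkhoff_trig_interpolation_general
    (T : ℝ) (hT : 0 < T) (m p N : ℕ)
    (x : Fin N → EuclideanSpace ℝ (Fin m))
    (hdist : Function.Injective x)
    (hbox : ∀ k i, x k i ∈ Set.Ico (0 : ℝ) T) :
    ∀ f : Fin N → (Fin m → ℕ) → ℂ,
      ∃ (Λ : Finset (Fin m → ℝ)) (a : (Fin m → ℝ) → ℂ),
        (∀ w ∈ Λ, ∀ j, ∃ z : ℤ, w j = 2 * Real.pi / T * z) ∧
        Λ.card ≤ ((p + 1) * N + 1) ^ m ∧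
        ∀ (k : Fin N) (α : Fin m → ℕ), (∑ j, α j) ≤ p →
          multiDeriv α
            (fun y => ∑ w ∈ Λ, a w *
              Complex.exp (Complex.I * ∑ j, (w j : ℂ) * (y j : ℂ)))
            (x k) = f k α := by
  intro f
  set c : ℝ := 2 * Real.pi / T
  have hc : c ≠ 0 := by positivity
  have hnodes : Function.Injective fun k j => Complex.exp (Complex.I * (c * x k j)) :=
    fun k l h => hdist <| PiLp.ext fun j =>
      cexp_I_mul_injOn hT (hbox k j) (hbox l j) (congrFun h j)
  obtain ⟨P, hdeg, hP⟩ := exists_mvPolynomial_hermiteBirkhoff (Complex.I * c) p (by simp [hc])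
    hnodes (fun _ _ => Complex.exp_ne_zero _) f
  refine ⟨P.support.image (latticeFreq c),
    Function.extend (latticeFreq c) (MvPolynomial.coeff · P) 0, ?_, ?_, fun k α hα => ?_⟩
  · simp only [Finset.mem_image]
    rintro _ ⟨d, -, rfl⟩ j
    exact ⟨d j, by simp [latticeFreq]⟩
  · simpa using Finset.card_image_le.trans (card_support_le_of_degreeOf_le hdeg)
  · rw [sum_extend_latticeFreq_eq_trigPoly hc, multiDeriv_trigPoly]
    exact hP k α fun j =>
      (Finset.single_le_sum (fun _ _ => Nat.zero_le _) (Finset.mem_univ j)).trans hα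

/-- Hermite–Birkhoff interpolation of all derivative data of order `≤ p` at
`N` distinct points of `[0,T)^m` by a trigonometric polynomial with at most
`((p+1)N+1)^m` frequencies from the lattice `(2π/T)ℤ^m`. -/
theorem hermite_birkhoff_trig_interpolation
    (T : ℝ) (hT : 0 < T) (m p N : ℕ) (hN : 1 ≤ N)
    (x : Fin N → EuclideanSpace ℝ (Fin m))
    (hdist : Function.Injective x)
    (hbox : ∀ k i, x k i ∈ Set.Ico (0 : ℝ) T) :
    ∀ f : Fin N → (Fin m → ℕ) → ℂ,
      ∃ (Λ : Finset (Fin m → ℝ)) (a : (Fin m → ℝ) → ℂ),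
        (∀ w ∈ Λ, ∀ j, ∃ z : ℤ, w j = 2 * Real.pi / T * z) ∧
        Λ.card ≤ ((p + 1) * N + 1) ^ m ∧
        ∀ (k : Fin N) (α : Fin m → ℕ), (∑ j, α j) ≤ p →
          multiDeriv α
            (fun y => ∑ w ∈ Λ, a w *
              Complex.exp (Complex.I * ∑ j, (w j : ℂ) * (y j : ℂ)))
            (x k) = f k α :=
  hermite_birkhoff_trig_interpolation_general T hT m p N x hdist hbox
end

section
/- Let f : S → ℝ and let f̃ : Ω → ℝ be a first-order Closest Point-like extension of f, i.e. f̃ is C¹ with f̃|_S = f and ∇f̃(x)·∇g(x) = 0 for all x ∈ S. Let F : Ω → ℝ be any C¹ function with F|_S = f. Then for every x ∈ S, ∇f̃(x) is the orthogonal projection of ∇F(x) onto the tangent hyperplane T_xS = {v ∈ ℝ^m : v·∇g(x) = 0}. In particular, ∇f̃(x) ∈ T_xS, and ∇f̃|_S is independent of the chosen first-order Closest Point-like extension of f; it equals the intrinsic surface gradient ∇_S f. -/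
open scoped RealInnerProductSpace

/-!
Parametrize the level set `S = {g = g a}` near `a` by the implicit function `ψ : ker (dg a) → E`
with `ψ 0 = a` and `dψ 0` the inclusion. A function `h` vanishing on `S` near `a` has `h ∘ ψ = 0`
near `0`, so its differential kills `ker (dg a) = (∇g a)ᗮ`; in other words its gradient is a
multiple of `∇g a`. Applied to `f̃ - F`, this says that `∇f̃ a - ∇F a` is normal to `S`, while
`∇f̃ a` is tangent by assumption: this characterizes the orthogonal projection of `∇F a` onto the
tangent hyperplane.
-/

open Filter Topology InnerProductSpace

section LevelSet

variable {𝕜 : Type*} [NontriviallyNormedField 𝕜] [CompleteSpace 𝕜]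
  {E : Type*} [NormedAddCommGroup E] [NormedSpace 𝕜 E] [CompleteSpace E]
  {F : Type*} [NormedAddCommGroup F] [NormedSpace 𝕜 F] [FiniteDimensional 𝕜 F]
  {G : Type*} [NormedAddCommGroup G] [NormedSpace 𝕜 G]

theorem HasFDerivAt.apply_eq_zero_of_eventually_eq_zero_on_fiber
    {f : E → F} {f' : E →L[𝕜] F} {h : E → G} {h' : E →L[𝕜] G} {a v : E}
    (hh : HasFDerivAt h h' a) (hf : HasStrictFDerivAt f f' a) (hf' : f'.range = ⊤)
    (hzero : ∀ᶠ y in 𝓝 a, f y = f a → h y = 0) (hv : f' v = 0) : h' v = 0 := by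
  set ψ := hf.implicitFunction f f' hf' (f a)
  have hψ : HasStrictFDerivAt ψ f'.ker.subtypeL 0 := hf.to_implicitFunction hf'
  have hψ0 : ψ 0 = a := hf.implicitFunction_apply_image hf'
  have hψ_fiber : ∀ᶠ z in 𝓝 0, f (ψ z) = f a :=
    (tendsto_const_nhds.prodMk_nhds tendsto_id).eventually (hf.map_implicitFunction_eq hf')
  have hψ_tendsto : Tendsto ψ (𝓝 0) (𝓝 a) := hψ0 ▸ hψ.continuousAt.tendsto
  have hcomp_zero : h ∘ ψ =ᶠ[𝓝 0] fun _ ↦ 0 := by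
    filter_upwards [hψ_fiber, hψ_tendsto.eventually hzero] with z hz_fiber hz using hz hz_fiber
  have hcomp : HasFDerivAt (h ∘ ψ) (h'.comp f'.ker.subtypeL) 0 :=
    (hψ0 ▸ hh).comp 0 hψ.hasFDerivAt
  have hcomp_eq : h'.comp f'.ker.subtypeL = 0 :=
    hcomp.unique ((hasFDerivAt_const 0 0).congr_of_eventuallyEq hcomp_zero)
  simpa using congr($hcomp_eq ⟨v, hv⟩)

end LevelSet

section Gradient

variable {E : Type*} [NormedAddCommGroup E] [InnerProductSpace ℝ E] [CompleteSpace E]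
  {g h u w : E → ℝ} {g' h' u' w' : E} {a : E}

theorem HasGradientAt.sub (hu : HasGradientAt u u' a) (hw : HasGradientAt w w' a) :
    HasGradientAt (fun y ↦ u y - w y) (u' - w') a := by
  rw [hasGradientAt_iff_hasFDerivAt, map_sub]
  exact (hasGradientAt_iff_hasFDerivAt.1 hu).sub (hasGradientAt_iff_hasFDerivAt.1 hw)

/-- Lagrange multiplier rule for a function vanishing on a regular level set. -/
theorem HasGradientAt.mem_span_singleton_of_eventually_eq_zero_on_fiber
    (hh : HasGradientAt h h' a) (hg : HasStrictFDerivAt g (toDual ℝ E g') a) (hg' : g' ≠ 0)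
    (hzero : ∀ᶠ y in 𝓝 a, g y = g a → h y = 0) : h' ∈ ℝ ∙ g' := by
  have hsurj : (toDual ℝ E g' : E →L[ℝ] ℝ).range = ⊤ :=
    Module.Dual.range_eq_top_of_ne_zero <| by
      rwa [ne_eq, ← ContinuousLinearMap.toLinearMap_zero, ContinuousLinearMap.coe_inj,
        map_eq_zero_iff _ (toDual ℝ E).injective]
  rw [← Submodule.orthogonal_orthogonal (ℝ ∙ g')]
  intro v hv
  rw [real_inner_comm]
  exact (hasGradientAt_iff_hasFDerivAt.1 hh).apply_eq_zero_of_eventually_eq_zero_on_fiber hg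
    hsurj hzero (Submodule.mem_orthogonal_singleton_iff_inner_right.1 hv)

theorem HasGradientAt.eq_orthogonalProjection_of_eventually_eq_on_fiber
    (hu : HasGradientAt u u' a) (hw : HasGradientAt w w' a)
    (hg : HasStrictFDerivAt g (toDual ℝ E g') a) (hg' : g' ≠ 0)
    (hagree : ∀ᶠ y in 𝓝 a, g y = g a → u y = w y) (hperp : ⟪u', g'⟫ = 0) :
    u' = ((ℝ ∙ g')ᗮ.orthogonalProjectionOnto w' : E) := by
  have hnormal : w' - u' ∈ ℝ ∙ g' :=
    (hw.sub hu).mem_span_singleton_of_eventually_eq_zero_on_fiber hg hg' <| by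
      filter_upwards [hagree] with y hy hgy using sub_eq_zero.2 (hy hgy).symm
  rw [← Submodule.starProjection_apply]
  exact (Submodule.eq_starProjection_of_mem_orthogonal
    (Submodule.mem_orthogonal_singleton_iff_inner_left.2 hperp)
    (Submodule.le_orthogonal_orthogonal _ hnormal)).symm

end Gradient

/-- for a first-order Closest Point-like extension `f̃` of `f : S → ℝ`
(where `S = {g = 0}` is a `C¹` level-set hypersurface), the gradient `∇f̃(x)` at `x ∈ S`
is the orthogonal projection of `∇F(x)` onto the tangent hyperplane `(∇g(x))^⊥`, for any
`C¹` extension `F` of `f`; in particular `∇f̃(x)` is tangent and `∇f̃|_S` does not depend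
on the chosen Closest Point-like extension. -/
theorem cp_like_extension_gradient_is_projection
    (m : ℕ) (Ω : Set (EuclideanSpace ℝ (Fin m))) (hΩ : IsOpen Ω)
    (g : EuclideanSpace ℝ (Fin m) → ℝ) (hg : ContDiffOn ℝ 1 g Ω)
    (hgrad : ∀ x ∈ Ω, g x = 0 → gradient g x ≠ 0)
    (ftil : EuclideanSpace ℝ (Fin m) → ℝ) (hftil : ContDiffOn ℝ 1 ftil Ω)
    (hperp : ∀ x ∈ Ω, g x = 0 → ⟪gradient ftil x, gradient g x⟫ = (0 : ℝ))
    (F : EuclideanSpace ℝ (Fin m) → ℝ) (hF : ContDiffOn ℝ 1 F Ω)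
    (hagree : ∀ x ∈ Ω, g x = 0 → ftil x = F x)
    (ftil₂ : EuclideanSpace ℝ (Fin m) → ℝ) (hftil₂ : ContDiffOn ℝ 1 ftil₂ Ω)
    (hperp₂ : ∀ x ∈ Ω, g x = 0 → ⟪gradient ftil₂ x, gradient g x⟫ = (0 : ℝ))
    (hagree₂ : ∀ x ∈ Ω, g x = 0 → ftil x = ftil₂ x) :
    ∀ x ∈ Ω, g x = 0 →
      gradient ftil x ∈ (ℝ ∙ gradient g x)ᗮ ∧
      gradient ftil x =
        (Submodule.orthogonalProjectionOnto (ℝ ∙ gradient g x)ᗮ (gradient F x) :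
          EuclideanSpace ℝ (Fin m)) ∧
      gradient ftil x = gradient ftil₂ x := by
  intro x hx hgx
  have hxΩ : Ω ∈ 𝓝 x := hΩ.mem_nhds hx
  have hasGradient {u : EuclideanSpace ℝ (Fin m) → ℝ} (hu : ContDiffOn ℝ 1 u Ω) :
      HasGradientAt u (gradient u x) x :=
    ((hu.contDiffAt hxΩ).differentiableAt one_ne_zero).hasGradientAt
  have hg_strict : HasStrictFDerivAt g (toDual ℝ _ (gradient g x)) x := by
    rw [toDual_gradient]
    exact (hg.contDiffAt hxΩ).hasStrictFDerivAt one_ne_zero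
  have on_fiber {u w : EuclideanSpace ℝ (Fin m) → ℝ} (huw : ∀ y ∈ Ω, g y = 0 → u y = w y) :
      ∀ᶠ y in 𝓝 x, g y = g x → u y = w y := by
    filter_upwards [hxΩ] with y hy hgy using huw y hy (hgy.trans hgx)
  have hproj := (hasGradient hftil).eq_orthogonalProjection_of_eventually_eq_on_fiber
    (hasGradient hF) hg_strict (hgrad x hx hgx) (on_fiber hagree) (hperp x hx hgx)
  have hproj₂ := (hasGradient hftil₂).eq_orthogonalProjection_of_eventually_eq_on_fiber
    (hasGradient hF) hg_strict (hgrad x hx hgx)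
    (on_fiber fun y hy hgy ↦ (hagree₂ y hy hgy).symm.trans (hagree y hy hgy)) (hperp₂ x hx hgx)
  exact ⟨Submodule.mem_orthogonal_singleton_iff_inner_left.2 (hperp x hx hgx), hproj,
    hproj.trans hproj₂.symm⟩
end

section
/- Let u, v : Ω → ℝ be C² functions with u = v on S, n·∇u = 0 on S, and n·∇v = 0 on S (i.e., u and v are both first-order Closest Point-like extensions of the same function on S). Then for every x ∈ S, ∇u(x) = ∇v(x) and Δu(x) − n(x)ᵀ D²u(x) n(x) = Δv(x) − n(x)ᵀ D²v(x) n(x). Consequently, for a first-order Closest Point-like extension f̃ of f : S → ℝ, the quantities ∇f̃|_S and (Δf̃ − nᵀ(D²f̃)n)|_S depend only on f, and they equal the surface gradient ∇_S f and the Laplace–Beltrami operator Δ_S f, respectively; in particular, computing Δ_S f this way requires only the normal field n and no curvature information. -/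
/-! The difference `w = u - v` vanishes on `S`, so by the Lagrange multiplier rule its gradient
is parallel to `∇g` there; being also orthogonal to `∇g`, it vanishes on `S`. The same argument
applied to each directional derivative `∂ₐw`, which therefore vanishes on `S`, shows that every
row of `D²w(x)` is parallel to `∇g(x)`. Symmetry of `D²w(x)` then forces
`D²w(x) = κ ∇g(x) ∇g(x)ᵀ`, whose trace `κ ‖∇g(x)‖²` equals its value `nᵀ D²w(x) n` on the unit
normal. -/

open scoped BigOperators RealInnerProductSpace

/-- The second partial derivative `∂_w ∂_v u` at `x`, i.e. `wᵀ (D²u)(x) v`. -/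
noncomputable def secondDeriv {m : ℕ} (u : EuclideanSpace ℝ (Fin m) → ℝ)
    (x v w : EuclideanSpace ℝ (Fin m)) : ℝ :=
  fderiv ℝ (fun y => fderiv ℝ u y v) x w

/-- The Euclidean Laplacian `Δu = trace D²u`. -/
noncomputable def laplacian {m : ℕ} (u : EuclideanSpace ℝ (Fin m) → ℝ)
    (x : EuclideanSpace ℝ (Fin m)) : ℝ :=
  ∑ i, secondDeriv u x (EuclideanSpace.single i 1) (EuclideanSpace.single i 1)

open Filter Topology

section LagrangeMultiplier

variable {E : Type*} [NormedAddCommGroup E] [NormedSpace ℝ E] [CompleteSpace E]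
  {f g : E → ℝ} {f' g' : E →L[ℝ] ℝ} {x : E}

theorem exists_eq_smul_of_eventually_zero_on_zeroSet (hf : HasStrictFDerivAt f f' x)
    (hg : HasStrictFDerivAt g g' x) (hg' : g' ≠ 0) (hgx : g x = 0)
    (hfg : ∀ᶠ y in 𝓝 x, g y = 0 → f y = 0) : ∃ c : ℝ, f' = c • g' := by
  have hextr : IsLocalExtrOn f {y | g y = g x} x := by
    left
    filter_upwards [mem_nhdsWithin_of_mem_nhds hfg, self_mem_nhdsWithin] with y hy hgy
    rw [hy (hgy.trans hgx), hfg.self_of_nhds hgx]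
  obtain ⟨a, b, hab, h0⟩ := hextr.exists_multipliers_of_hasStrictFDerivAt_1d hg hf
  have hb : b ≠ 0 := by
    rintro rfl
    have ha : a ≠ 0 := fun ha => hab (by simp [ha])
    exact hg' (by simpa [ha] using h0)
  refine ⟨-a / b, ?_⟩
  ext y
  have hy : a * g' y + b * f' y = 0 := by simpa using congr($h0 y)
  rw [smul_apply, smul_eq_mul]
  field_simp
  linear_combination hy

theorem eq_zero_of_eventually_zero_on_zeroSet (hf : HasStrictFDerivAt f f' x)
    (hg : HasStrictFDerivAt g g' x) (hgx : g x = 0) (hfg : ∀ᶠ y in 𝓝 x, g y = 0 → f y = 0)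
    {v : E} (hf'v : f' v = 0) (hg'v : g' v ≠ 0) : f' = 0 := by
  obtain ⟨c, rfl⟩ := exists_eq_smul_of_eventually_zero_on_zeroSet hf hg
    (fun h => hg'v (by simp [h])) hgx hfg
  obtain rfl : c = 0 := by simpa [hg'v] using hf'v
  exact zero_smul ℝ g'

end LagrangeMultiplier

theorem exists_eq_mul_mul_of_symm {α K : Type*} [Field K] {B : α → α → K} {c ℓ : α → K}
    (hB : ∀ a t, B a t = c a * ℓ t) (hsymm : ∀ a t, B a t = B t a) {v : α} (hv : ℓ v ≠ 0) :
    ∃ κ, ∀ a t, B a t = κ * ℓ a * ℓ t := by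
  refine ⟨c v / ℓ v, fun a t => ?_⟩
  have hca : c a * ℓ v = c v * ℓ a := by rw [← hB, hsymm, hB]
  rw [hB, div_mul_eq_mul_div, div_mul_eq_mul_div, eq_div_iff hv]
  linear_combination ℓ t * hca

section InnerProductSpace

variable {E : Type*} [NormedAddCommGroup E] [InnerProductSpace ℝ E] [CompleteSpace E]
  {u v g : E → ℝ} {x : E}

theorem fderiv_eq_of_eventually_eq_on_zeroSet (hu : ContDiffAt ℝ 1 u x) (hv : ContDiffAt ℝ 1 v x)
    (hg : ContDiffAt ℝ 1 g x) (hgx : g x = 0) (hgrad : gradient g x ≠ 0)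
    (huv : ∀ᶠ y in 𝓝 x, g y = 0 → u y = v y)
    (hnu : ⟪gradient g x, gradient u x⟫ = 0) (hnv : ⟪gradient g x, gradient v x⟫ = 0) :
    fderiv ℝ u x = fderiv ℝ v x := by
  refine sub_eq_zero.1 <| eq_zero_of_eventually_zero_on_zeroSet
    ((hu.hasStrictFDerivAt one_ne_zero).sub (hv.hasStrictFDerivAt one_ne_zero))
    (hg.hasStrictFDerivAt one_ne_zero) hgx (huv.mono fun y hy hgy => sub_eq_zero.2 (hy hgy))
    (v := gradient g x) ?_ ?_
  · rw [sub_apply, ← inner_gradient_left, ← inner_gradient_left,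
      real_inner_comm, hnu, real_inner_comm, hnv, sub_zero]
  · rwa [← inner_gradient_left, ne_eq, inner_self_eq_zero]

end InnerProductSpace

section EuclideanSpace

variable {m : ℕ} {u v g : EuclideanSpace ℝ (Fin m) → ℝ} {x : EuclideanSpace ℝ (Fin m)}

theorem secondDeriv_eq_fderiv_fderiv (hu : DifferentiableAt ℝ (fderiv ℝ u) x)
    (a t : EuclideanSpace ℝ (Fin m)) : secondDeriv u x a t = fderiv ℝ (fderiv ℝ u) x t a := by
  rw [secondDeriv, fderiv_clm_apply hu (differentiableAt_const a)]
  simp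

theorem secondDeriv_comm (hu : ContDiffAt ℝ 2 u x) (a t : EuclideanSpace ℝ (Fin m)) :
    secondDeriv u x a t = secondDeriv u x t a := by
  have hdiff := (hu.fderiv_right (m := 1) le_rfl).differentiableAt one_ne_zero
  rw [secondDeriv_eq_fderiv_fderiv hdiff, secondDeriv_eq_fderiv_fderiv hdiff,
    hu.isSymmSndFDerivAt (by simp)]

theorem exists_secondDeriv_sub_eq_mul_inner (hu : ContDiffAt ℝ 2 u x) (hv : ContDiffAt ℝ 2 v x)
    (hg : ContDiffAt ℝ 1 g x) (hgx : g x = 0) (hgrad : gradient g x ≠ 0)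
    (huv : ∀ᶠ y in 𝓝 x, g y = 0 → fderiv ℝ u y = fderiv ℝ v y) :
    ∃ κ : ℝ, ∀ a t, secondDeriv u x a t - secondDeriv v x a t
      = κ * ⟪gradient g x, a⟫ * ⟪gradient g x, t⟫ := by
  have hdir : ∀ a, ∃ c : ℝ, ∀ t,
      secondDeriv u x a t - secondDeriv v x a t = c * ⟪gradient g x, t⟫ := by
    intro a
    have hua : ContDiffAt ℝ 1 (fun y => fderiv ℝ u y a) x :=
      (hu.fderiv_right (m := 1) le_rfl).clm_apply contDiffAt_const
    have hva : ContDiffAt ℝ 1 (fun y => fderiv ℝ v y a) x :=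
      (hv.fderiv_right (m := 1) le_rfl).clm_apply contDiffAt_const
    obtain ⟨c, hc⟩ := exists_eq_smul_of_eventually_zero_on_zeroSet
      ((hua.sub hva).hasStrictFDerivAt one_ne_zero) (hg.hasStrictFDerivAt one_ne_zero)
      (fun h => hgrad (by simp [gradient, h])) hgx
      (huv.mono fun y hy hgy => by simp [hy hgy])
    refine ⟨c, fun t => ?_⟩
    have hct := congr($hc t)
    rw [fderiv_fun_sub (hua.differentiableAt one_ne_zero) (hva.differentiableAt one_ne_zero)]
      at hct
    simpa [secondDeriv] using hct
  choose c hc using hdir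
  exact exists_eq_mul_mul_of_symm (B := fun a t => secondDeriv u x a t - secondDeriv v x a t) hc
    (fun a t => by rw [secondDeriv_comm hu, secondDeriv_comm hv])
    (v := gradient g x) (by rwa [ne_eq, inner_self_eq_zero])

theorem sum_single_eq_of_eq_mul_inner
    {B : EuclideanSpace ℝ (Fin m) → EuclideanSpace ℝ (Fin m) → ℝ} {κ : ℝ}
    {G : EuclideanSpace ℝ (Fin m)} (hB : ∀ a t, B a t = κ * ⟪G, a⟫ * ⟪G, t⟫) :
    ∑ i, B (EuclideanSpace.single i 1) (EuclideanSpace.single i 1)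
      = B (‖G‖⁻¹ • G) (‖G‖⁻¹ • G) := by
  have hnormal : ‖G‖⁻¹ * ‖G‖ ^ 2 = ‖G‖ := by rw [sq, ← mul_assoc, inv_mul_mul_self]
  simp only [hB, EuclideanSpace.inner_single_right, real_inner_smul_right,
    real_inner_self_eq_norm_sq, hnormal, one_mul, conj_trivial]
  rw [mul_assoc, ← sq, EuclideanSpace.real_norm_sq_eq, Finset.mul_sum]
  simp only [mul_assoc, sq]

end EuclideanSpace

/-- two first-order Closest Point-like extensions `u, v` of the same
function on the level-set hypersurface `S = {g = 0}` have the same gradient on `S` and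
the same value of `Δw − nᵀ(D²w)n` on `S`; these equal the surface gradient and the
Laplace–Beltrami operator of the common restriction, and require only the normal `n`. -/
theorem cp_like_extensions_give_surface_operators
    (m : ℕ) (Ω : Set (EuclideanSpace ℝ (Fin m))) (hΩ : IsOpen Ω)
    (g : EuclideanSpace ℝ (Fin m) → ℝ) (hg : ContDiffOn ℝ 2 g Ω)
    (hgrad : ∀ x ∈ Ω, g x = 0 → gradient g x ≠ 0)
    (u v : EuclideanSpace ℝ (Fin m) → ℝ)
    (hu : ContDiffOn ℝ 2 u Ω) (hv : ContDiffOn ℝ 2 v Ω)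
    (huv : ∀ x ∈ Ω, g x = 0 → u x = v x)
    (hnu : ∀ x ∈ Ω, g x = 0 → ⟪gradient g x, gradient u x⟫ = (0 : ℝ))
    (hnv : ∀ x ∈ Ω, g x = 0 → ⟪gradient g x, gradient v x⟫ = (0 : ℝ))
    (n : EuclideanSpace ℝ (Fin m) → EuclideanSpace ℝ (Fin m))
    (hn : ∀ y, n y = ‖gradient g y‖⁻¹ • gradient g y) :
    ∀ x ∈ Ω, g x = 0 →
      gradient u x = gradient v x ∧
      laplacian u x - secondDeriv u x (n x) (n x)
        = laplacian v x - secondDeriv v x (n x) (n x) := by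
  intro x hx hgx
  have hΩx : Ω ∈ 𝓝 x := hΩ.mem_nhds hx
  have hfderiv : ∀ y ∈ Ω, g y = 0 → fderiv ℝ u y = fderiv ℝ v y := fun y hy hgy =>
    have hΩy : Ω ∈ 𝓝 y := hΩ.mem_nhds hy
    fderiv_eq_of_eventually_eq_on_zeroSet ((hu.contDiffAt hΩy).of_le one_le_two)
      ((hv.contDiffAt hΩy).of_le one_le_two) ((hg.contDiffAt hΩy).of_le one_le_two) hgy
      (hgrad y hy hgy) (eventually_of_mem hΩy huv) (hnu y hy hgy) (hnv y hy hgy)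
  refine ⟨congrArg _ (hfderiv x hx hgx), ?_⟩
  obtain ⟨κ, hκ⟩ := exists_secondDeriv_sub_eq_mul_inner (hu.contDiffAt hΩx)
    (hv.contDiffAt hΩx) ((hg.contDiffAt hΩx).of_le one_le_two) hgx (hgrad x hx hgx)
    (eventually_of_mem hΩx hfderiv)
  have htrace := sum_single_eq_of_eq_mul_inner hκ
  rw [Finset.sum_sub_distrib, ← hn x] at htrace
  rw [laplacian, laplacian]
  linarith
end
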